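/- arXiv:1801.03602 — 8 statements merged into one kernel-verified Lean document; each statement's English description precedes it below -/
import Mathlib

section
/- Let 1 ≤ k_1 < k_2 < ... < k_s be fixed integers and let r = ⌊log_2(k_s)⌋ + 1. Then the exponential sum over F_2 of the symmetric Boolean function e_{n,[k_1,...,k_s]} = e_{n,k_1} ⊕ ... ⊕ e_{n,k_s} satisfies S(e_{n,[k_1,...,k_s]}) = c_0(k_1,...,k_s)·2^n + Σ_{j=1}^{2^r−1} c_j(k_1,...,k_s)·(1+ζ_j)^n, where ζ_j = e^{πij/2^{r−1}}, i = √−1, and c_j(k_1,...,k_s) = (1/2^r) Σ_{t=0}^{2^r−1} (−1)^{C(t,k_1)+...+C(t,k_s)} ζ_j^{−t}. -/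
/-!
Since `e_{n,k}(x) = C(|x|, k) mod 2`, the exponential sum is the binomial transform
`∑_w C(n, w) g(w)` of the sign sequence `g(w) = (-1)^(C(w,k_1)+⋯+C(w,k_s))`.
As `C(2^r, j)` is even for `0 < j < 2^r`, Vandermonde's identity makes `g` periodic of period `2^r`
once every `k_i < 2^r`, so discrete Fourier inversion writes `g(w) = ∑_j c_j ζ_j^w`,
and the binomial theorem turns `∑_w C(n, w) ζ_j^w` into `(1 + ζ_j)^n`.
-/

open Finset

noncomputable section

/-- Evaluation of the elementary symmetric polynomial in `n` variables of degree `k`. -/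
def esymmVal {R : Type*} [CommRing R] (n k : ℕ) (x : Fin n → R) : R :=
  ∑ s ∈ Finset.powersetCard k Finset.univ, ∏ i ∈ s, x i

namespace Nat

theorem choose_add_prime_pow_modEq {p : ℕ} (hp : p.Prime) {r m : ℕ} (hm : m < p ^ r) (w : ℕ) :
    (w + p ^ r).choose m ≡ w.choose m [MOD p] := by
  rw [← ZMod.natCast_eq_natCast_iff, add_choose_eq, Nat.cast_sum,
    sum_eq_single_of_mem (m, 0) (by simp)]
  · simp
  rintro ⟨i, j⟩ hij hne
  rw [HasAntidiagonal.mem_antidiagonal] at hij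
  have hj0 : j ≠ 0 := by rintro rfl; exact hne (by simp [← hij])
  have hjp : j ≠ p ^ r := by rintro rfl; omega
  rw [Nat.cast_mul, (ZMod.natCast_eq_zero_iff _ p).2 (hp.dvd_choose_pow hj0 hjp), mul_zero]

theorem choose_mod_prime_pow_modEq {p : ℕ} (hp : p.Prime) {r m : ℕ} (hm : m < p ^ r) (w : ℕ) :
    (w % p ^ r).choose m ≡ w.choose m [MOD p] := by
  conv_rhs => rw [← Nat.mod_add_div w (p ^ r)]
  induction w / p ^ r with
  | zero => simp [Nat.ModEq.refl]
  | succ q ih =>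
    rw [Nat.mul_succ, ← add_assoc]
    exact ih.trans (choose_add_prime_pow_modEq hp hm _).symm

end Nat

theorem esymmVal_indicator {R : Type*} [CommRing R] (n m : ℕ) (A : Finset (Fin n)) :
    esymmVal n m (fun i => if i ∈ A then (1 : R) else 0) = (A.card.choose m : R) := by
  simp only [esymmVal, prod_boole, ← subset_iff]
  rw [sum_boole, ← card_powersetCard]
  congr 2
  ext t
  simp [mem_powersetCard, and_comm]

theorem sum_zmod_two_cube_eq_sum_finset {M : Type*} [AddCommMonoid M] (n : ℕ)
    (F : (Fin n → ZMod 2) → M) :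
    ∑ x, F x = ∑ A : Finset (Fin n), F (fun i => if i ∈ A then 1 else 0) := by
  refine (Fintype.sum_bijective (fun (A : Finset (Fin n)) i => if i ∈ A then (1 : ZMod 2) else 0)
    ?_ _ _ fun _ => rfl).symm
  refine (Fintype.bijective_iff_injective_and_card _).2 ⟨fun A B hAB => ?_, by simp⟩
  ext i
  have := congrFun hAB i
  by_cases hA : i ∈ A <;> by_cases hB : i ∈ B <;> simp_all

theorem sum_neg_one_pow_sum_esymmVal {R : Type*} [Ring R] (n : ℕ) {s : ℕ} (k : Fin s → ℕ) :
    ∑ x : Fin n → ZMod 2, (-1 : R) ^ (∑ i, esymmVal n (k i) x).val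
      = ∑ w ∈ range (n + 1), (n.choose w : R) * (-1) ^ (∑ i, w.choose (k i)) := by
  rw [sum_zmod_two_cube_eq_sum_finset]
  simp only [esymmVal_indicator, ← Nat.cast_sum, ZMod.val_natCast, ← neg_one_pow_eq_pow_mod_two]
  rw [← powerset_univ, sum_powerset_apply_card (fun w => (-1 : R) ^ ∑ i, w.choose (k i))]
  simp [nsmul_eq_mul]

theorem IsPrimitiveRoot.sum_zpow_pow {K : Type*} [Field K] {ω : K} {N : ℕ}
    (hω : IsPrimitiveRoot ω N) (m : ℤ) :
    ∑ j ∈ range N, (ω ^ m) ^ j = if (N : ℤ) ∣ m then (N : K) else 0 := by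
  split_ifs with hm
  · simp [(hω.zpow_eq_one_iff_dvd m).2 hm]
  · rw [geom_sum_eq fun h => hm ((hω.zpow_eq_one_iff_dvd m).1 h), ← zpow_natCast,
      ← zpow_mul, mul_comm, zpow_mul, zpow_natCast, hω.pow_eq_one, one_zpow, sub_self, zero_div]

theorem IsPrimitiveRoot.sum_fourierCoeff_mul_pow {K : Type*} [Field K] {ω : K} {N : ℕ} [NeZero N]
    (hω : IsPrimitiveRoot ω N) {g : ℕ → K} (hg : ∀ w, g (w % N) = g w) (w : ℕ) :
    ∑ j ∈ range N, ((1 / N : K) * ∑ t ∈ range N, g t * (ω ^ j) ^ (-(t : ℤ))) * (ω ^ j) ^ w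
      = g w := by
  have hN : (N : K) ≠ 0 := hω.neZero'.out
  have hω0 : ω ≠ 0 := hω.ne_zero (NeZero.ne N)
  have hpow : ∀ j t : ℕ, (ω ^ j) ^ (-(t : ℤ)) * (ω ^ j) ^ w = (ω ^ ((w : ℤ) - t)) ^ j := by
    intro j t
    rw [← zpow_natCast (ω ^ j) w, ← zpow_add₀ (pow_ne_zero j hω0), ← zpow_natCast ω j,
      ← zpow_mul, ← zpow_natCast (ω ^ _) j, ← zpow_mul]
    ring_nf
  have hdvd : ∀ t ∈ range N, ((N : ℤ) ∣ (w : ℤ) - t ↔ w % N = t) := fun t ht => by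
    rw [← Nat.modEq_iff_dvd, Nat.ModEq, Nat.mod_eq_of_lt (mem_range.1 ht), eq_comm]
  calc _ = (1 / N : K) * ∑ t ∈ range N, g t * ∑ j ∈ range N, (ω ^ ((w : ℤ) - t)) ^ j := by
        simp only [sum_mul, mul_sum, mul_assoc, hpow]
        exact sum_comm
    _ = (1 / N : K) * ∑ t ∈ range N, if w % N = t then g t * N else 0 := by
        refine congrArg _ (sum_congr rfl fun t ht => ?_)
        rw [hω.sum_zpow_pow, mul_ite, mul_zero, if_congr (hdvd t ht) rfl rfl]
    _ = g w := by
        rw [sum_ite_eq, if_pos (mem_range.2 (Nat.mod_lt w (NeZero.pos N))), hg]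
        field_simp

theorem sum_choose_mul_sum_mul_pow {ι R : Type*} [CommSemiring R] (n : ℕ) (S : Finset ι)
    (a z : ι → R) :
    ∑ w ∈ range (n + 1), (n.choose w : R) * ∑ j ∈ S, a j * z j ^ w
      = ∑ j ∈ S, a j * (1 + z j) ^ n := by
  simp only [mul_sum, add_comm (1 : R), add_pow, one_pow, mul_one]
  rw [sum_comm]
  exact sum_congr rfl fun j _ => sum_congr rfl fun w _ => by ring

/-- Cai–Green–Thierauf closed formula for exponential sums of symmetric Boolean functions. -/
theorem stmt0 (s : ℕ) (hs : 0 < s) (k : Fin s → ℕ)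
    (hmono : StrictMono k) (n : ℕ)
    (r : ℕ) (hr : r = Nat.log 2 (k ⟨s - 1, by omega⟩) + 1)
    (ζ : ℕ → ℂ)
    (hζ : ∀ j, ζ j = Complex.exp ((Real.pi : ℂ) * Complex.I * j / 2 ^ (r - 1)))
    (c : ℕ → ℂ)
    (hc : ∀ j, c j = (1 / 2 ^ r) *
      ∑ t ∈ Finset.range (2 ^ r),
        (-1 : ℂ) ^ (∑ i, Nat.choose t (k i)) * ζ j ^ (-(t : ℤ))) :
    (∑ x : Fin n → ZMod 2, (-1 : ℂ) ^ (∑ i, esymmVal n (k i) x).val)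
      = c 0 * 2 ^ n + ∑ j ∈ Finset.Ico 1 (2 ^ r), c j * (1 + ζ j) ^ n := by
  have hkN : ∀ i, k i < 2 ^ r := fun i => by
    have hlast : i ≤ ⟨s - 1, by omega⟩ := Fin.le_def.2 (Nat.le_sub_one_of_lt i.2)
    exact hr ▸ (hmono.monotone hlast).trans_lt (Nat.lt_pow_succ_log_self one_lt_two _)
  have hζpow : ∀ j, ζ j = ζ 1 ^ j := fun j => by
    rw [hζ, hζ, ← Complex.exp_nat_mul]
    ring_nf
  have hω : IsPrimitiveRoot (ζ 1) (2 ^ r) := by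
    obtain ⟨r, rfl⟩ : ∃ r', r = r' + 1 := ⟨_, hr⟩
    convert Complex.isPrimitiveRoot_exp (2 ^ (r + 1)) (by positivity) using 2
    rw [hζ]
    push_cast
    ring_nf
  have hg : ∀ w, (-1 : ℂ) ^ (∑ i, (w % 2 ^ r).choose (k i)) = (-1) ^ (∑ i, w.choose (k i)) :=
    fun w => by
      rw [neg_one_pow_eq_pow_mod_two, Nat.ModEq.sum fun i _ =>
        Nat.choose_mod_prime_pow_modEq Nat.prime_two (hkN i) w, ← neg_one_pow_eq_pow_mod_two]
  have hinv : ∀ w, ∑ j ∈ range (2 ^ r), c j * ζ j ^ w = (-1) ^ (∑ i, w.choose (k i)) := by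
    intro w
    rw [← hω.sum_fourierCoeff_mul_pow (g := fun w => (-1 : ℂ) ^ ∑ i, w.choose (k i)) hg w]
    refine sum_congr rfl fun j _ => ?_
    rw [hc, hζpow]
    push_cast
    rfl
  rw [sum_neg_one_pow_sum_esymmVal]
  simp_rw [← hinv]
  rw [sum_choose_mul_sum_mul_pow, range_eq_Ico, sum_eq_sum_Ico_succ_bot (by positivity),
    hζpow 0, pow_zero]
  norm_num
end
end

section
/- Let n, k be natural numbers with k ≤ n, p a prime, q = p^r for some positive integer r, and let F_q = {0, α_1, ..., α_{q−1}} be the Galois field of q elements. Then S_{F_q}(e_{n,k}) = Σ_{m_1=0}^{n} Σ_{m_2=0}^{n−m_1} ... Σ_{m_{q−1}=0}^{n−m_1−...−m_{q−2}} multinomial(n; m_0*, m_1, ..., m_{q−1}) · exp((2πi/p) · Tr_{F_q/F_p}(Λ_{α_1,...,α_{q−1}}(k, m_1, ..., m_{q−1}))), where m_0* = n − (m_1 + ... + m_{q−1}). -/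
noncomputable section

/-- `Lam l a m k` is the quantity `Λ_{a_1,…,a_l}(k, m_1,…,m_l)`. -/
def Lam {R : Type*} [CommRing R] : (l : ℕ) → (Fin l → R) → (Fin l → ℕ) → ℤ → R
  | 0, _, _, k => if k = 0 then 1 else 0
  | l + 1, a, m, k =>
      ∑ j ∈ Finset.range (m (Fin.last l) + 1),
        (Nat.choose (m (Fin.last l)) j : R) * a (Fin.last l) ^ j *
          Lam l (fun i => a i.castSucc) (fun i => m i.castSucc) (k - j)

/-!
The value `e_{n,k}(x)` is the coefficient of `X^k` in `∏ᵢ (1 + xᵢ X)`, so it depends only on how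
many coordinates of `x` take each value of `F_q`. Grouping equal factors, the product becomes
`∏ⱼ (1 + αⱼ X)^{mⱼ}` (the factors with `xᵢ = 0` are `1`), and peeling off one factor at a time shows
that its `X^k` coefficient satisfies the recursion defining `Λ_{α₁,…,α_{q-1}}(k, m)`. Finally, the
number of `x ∈ F_qⁿ` with prescribed value counts `(m₀, …, m_{q-1})` is the multinomial
coefficient, as one reads off by comparing coefficients in two expansions of `(∑ₐ Xₐ)ⁿ`.
-/

open Finset

section Polynomial

open Polynomial

variable {R : Type*} [CommRing R]

lemma Lam_of_neg : ∀ (l : ℕ) (a : Fin l → R) (m : Fin l → ℕ) {k : ℤ}, k < 0 → Lam l a m k = 0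
  | 0, _, _, k, hk => by rw [Lam, if_neg hk.ne]
  | l + 1, a, m, k, hk => by
      rw [Lam]
      exact sum_eq_zero fun j _ => by rw [Lam_of_neg l _ _ (by omega), mul_zero]

lemma coeff_one_add_C_mul_X_pow_mul (a : R) (M : ℕ) (P : R[X]) (k : ℕ) :
    ((1 + C a * X) ^ M * P).coeff k =
      ∑ j ∈ range (M + 1), (M.choose j : R) * a ^ j * if j ≤ k then P.coeff (k - j) else 0 := by
  rw [add_comm, add_pow, sum_mul, finsetSum_coeff]
  refine sum_congr rfl fun j _ => ?_
  rw [one_pow, mul_one, mul_pow, ← C_pow, ← C_eq_natCast, mul_comm (C _ * _), ← mul_assoc,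
    ← C_mul, mul_assoc, coeff_C_mul, coeff_X_pow_mul', mul_comm (M.choose j : R)]

lemma coeff_prod_one_add_C_mul_X_pow_eq_Lam :
    ∀ (l : ℕ) (a : Fin l → R) (m : Fin l → ℕ) (k : ℕ),
      (∏ j, (1 + C (a j) * X) ^ m j).coeff k = Lam l a m k
  | 0, a, m, k => by simp [Lam, coeff_one]
  | l + 1, a, m, k => by
      rw [Fin.prod_univ_castSucc, mul_comm, coeff_one_add_C_mul_X_pow_mul, Lam]
      refine sum_congr rfl fun j _ => ?_
      split_ifs with hjk
      · rw [coeff_prod_one_add_C_mul_X_pow_eq_Lam l, Nat.cast_sub hjk]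
      · rw [Lam_of_neg l _ _ (by omega)]

lemma esymmVal_eq_coeff_prod (n k : ℕ) (x : Fin n → R) :
    esymmVal n k x = (∏ i, (1 + C (x i) * X)).coeff k := by
  simp_rw [add_comm (1 : R[X]), prod_add, prod_const_one, mul_one, prod_mul_distrib, prod_const,
    ← map_prod, finsetSum_coeff, coeff_C_mul_X_pow, esymmVal, powersetCard_eq_filter, sum_filter]
  exact sum_congr rfl fun t _ => if_congr eq_comm rfl rfl

end Polynomial

section FiberCount

open MvPolynomial

variable {β : Type*} [Fintype β]

lemma prod_X_pow_eq_monomial_equivFunOnFinite {R : Type*} [CommSemiring R] (c : β → ℕ) :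
    ∏ b, (X b : MvPolynomial β R) ^ c b = monomial (Finsupp.equivFunOnFinite.symm c) 1 := by
  rw [monomial_eq, C_1, one_mul, Finsupp.prod_fintype _ _ (by simp)]
  rfl

variable [DecidableEq β]

lemma prod_comp_eq_prod_pow_card_fiber {ι M : Type*} [Fintype ι] [CommMonoid M] (y : ι → β)
    (f : β → M) : ∏ i, f (y i) = ∏ b, f b ^ #{i | y i = b} := by
  rw [Finset.prod_comp]
  refine prod_subset (subset_univ _) fun b _ hb => ?_
  rw [filter_eq_empty_iff.mpr fun i _ hi => hb (mem_image.mpr ⟨i, mem_univ i, hi⟩), card_empty,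
    pow_zero]

theorem card_filter_card_fiber_eq_multinomial (n : ℕ) {c : β → ℕ} (hc : c ∈ piAntidiag univ n) :
    #{y : Fin n → β | (fun b => #{i | y i = b}) = c} = Nat.multinomial univ c := by
  have expand_product : (∑ b, X b : MvPolynomial β ℕ) ^ n =
      ∑ y : Fin n → β, monomial (Finsupp.equivFunOnFinite.symm fun b => #{i | y i = b}) 1 := by
    rw [← Fin.prod_const, prod_univ_sum, Fintype.piFinset_univ]
    simp_rw [prod_comp_eq_prod_pow_card_fiber _ X, prod_X_pow_eq_monomial_equivFunOnFinite]
  have multinomial_thm := sum_pow_eq_sum_piAntidiag univ (X : β → MvPolynomial β ℕ) n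
  rw [expand_product] at multinomial_thm
  have coeff_eq := congrArg (coeff (Finsupp.equivFunOnFinite.symm c)) multinomial_thm
  simp_rw [prod_X_pow_eq_monomial_equivFunOnFinite, coeff_sum, ← map_natCast C, coeff_C_mul,
    coeff_monomial, EmbeddingLike.apply_eq_iff_eq, mul_ite, mul_one, mul_zero, sum_boole,
    sum_ite_eq', if_pos hc] at coeff_eq
  exact_mod_cast coeff_eq

theorem sum_comp_card_fiber_eq_sum_multinomial_smul {M : Type*} [AddCommMonoid M] (n : ℕ)
    (f : (β → ℕ) → M) :
    ∑ y : Fin n → β, f (fun b => #{i | y i = b}) =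
      ∑ c ∈ piAntidiag univ n, Nat.multinomial univ c • f c := by
  have maps_to (y : Fin n → β) : (fun b => #{i | y i = b}) ∈ piAntidiag univ n := by
    simp [← card_eq_sum_card_fiberwise fun i _ => mem_univ (y i)]
  rw [← sum_fiberwise_of_maps_to fun y _ => maps_to y]
  refine sum_congr rfl fun c hc => ?_
  rw [sum_congr rfl fun y hy => congrArg f (mem_filter.mp hy).2, sum_const,
    card_filter_card_fiber_eq_multinomial n hc]

end FiberCount

lemma sum_piAntidiag_option {ι M : Type*} [Fintype ι] [DecidableEq ι] [AddCommMonoid M] (n : ℕ)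
    (g : (Option ι → ℕ) → M) :
    ∑ c ∈ piAntidiag univ n, g c =
      ∑ m ∈ (Fintype.piFinset fun _ : ι => range (n + 1)).filter (fun m => ∑ i, m i ≤ n),
        g (fun o => o.elim (n - ∑ i, m i) m) := by
  refine (sum_nbij' (fun (m : ι → ℕ) (o : Option ι) => o.elim (n - ∑ i, m i) m)
    (fun (c : Option ι → ℕ) i => c (some i)) ?_ ?_ (fun _ _ => rfl) ?_ fun _ _ => rfl).symm
  · intro m hm
    simp only [mem_filter] at hm
    simp [Fintype.sum_option, Nat.sub_add_cancel hm.2]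
  · intro c hc
    have hsum := (mem_piAntidiag.mp hc).1
    rw [Fintype.sum_option] at hsum
    have hle (i : ι) : c (some i) ≤ ∑ j, c (some j) :=
      single_le_sum (f := fun j => c (some j)) (fun _ _ => Nat.zero_le _) (mem_univ i)
    simp only [mem_filter, Fintype.mem_piFinset, mem_range]
    exact ⟨fun i => by have := hle i; omega, by omega⟩
  · intro c hc
    have hsum := (mem_piAntidiag.mp hc).1
    rw [Fintype.sum_option] at hsum
    funext o
    cases o with
    | none => simp only [Option.elim_none]; omega
    | some i => rfl

open Polynomial in
theorem sum_comp_esymmVal_eq_sum_multinomial_smul {K M : Type*} [CommRing K] [Fintype K]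
    [AddCommMonoid M] {l : ℕ} (e : Option (Fin l) ≃ K) (he : e none = 0) (ψ : K → M) (n k : ℕ) :
    ∑ x : Fin n → K, ψ (esymmVal n k x) =
      ∑ m ∈ (Fintype.piFinset fun _ : Fin l => range (n + 1)).filter (fun m => ∑ i, m i ≤ n),
        Nat.multinomial univ (fun o : Option (Fin l) => o.elim (n - ∑ i, m i) m) •
          ψ (Lam l (fun i => e (some i)) m k) := by
  have esymmVal_comp (y : Fin n → Option (Fin l)) :
      esymmVal n k (fun j => e (y j)) =
        Lam l (fun i => e (some i)) (fun i => #{j | y j = some i}) k := by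
    rw [esymmVal_eq_coeff_prod, prod_comp_eq_prod_pow_card_fiber y fun o => 1 + C (e o) * X,
      Fintype.prod_option, he, C_0, zero_mul, add_zero, one_pow, one_mul,
      coeff_prod_one_add_C_mul_X_pow_eq_Lam]
  calc ∑ x : Fin n → K, ψ (esymmVal n k x)
      = ∑ y : Fin n → Option (Fin l), ψ (esymmVal n k fun j => e (y j)) :=
        (Equiv.sum_comp (Equiv.piCongrRight fun _ : Fin n => e) _).symm
    _ = ∑ y : Fin n → Option (Fin l),
          ψ (Lam l (fun i => e (some i)) (fun i => #{j | y j = some i}) k) := by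
        simp_rw [esymmVal_comp]
    _ = _ := by
        rw [sum_comp_card_fiber_eq_sum_multinomial_smul n
          fun c => ψ (Lam l (fun i => e (some i)) (fun i => c (some i)) k), sum_piAntidiag_option]
        rfl

/-- The nested sums `∑_{m_1=0}^{n} ∑_{m_2=0}^{n-m_1} ⋯` are encoded as one sum over all
`(m_1, …, m_{q-1})` with `m_1 + ⋯ + m_{q-1} ≤ n`, and `none : Option (Fin (q-1))` carries
`m_0* = n - (m_1 + ⋯ + m_{q-1})`. -/
theorem stmt2_general (p : ℕ) (r : ℕ) (n k : ℕ)
    (K : Type*) [Field K] [Fintype K] [Algebra (ZMod p) K]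
    (hcard : Fintype.card K = p ^ r)
    (α : Fin (p ^ r - 1) → K)
    (hinj : Function.Injective α) (h0 : ∀ i, α i ≠ 0) :
    (∑ x : Fin n → K,
        Complex.exp (2 * (Real.pi : ℂ) * Complex.I / p *
          ((Algebra.trace (ZMod p) K (esymmVal n k x)).val : ℂ)))
      = ∑ m ∈ (Fintype.piFinset fun _ : Fin (p ^ r - 1) => Finset.range (n + 1)).filter
            (fun m => ∑ i, m i ≤ n),
          (Nat.multinomial Finset.univ
              (fun o : Option (Fin (p ^ r - 1)) => o.elim (n - ∑ i, m i) m) : ℂ) *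
            Complex.exp (2 * (Real.pi : ℂ) * Complex.I / p *
              ((Algebra.trace (ZMod p) K (Lam (p ^ r - 1) α m (k : ℤ))).val : ℂ)) := by
  have enum_bijective : Function.Bijective fun o : Option (Fin (p ^ r - 1)) => o.elim 0 α := by
    refine (Fintype.bijective_iff_injective_and_card _).mpr
      ⟨Option.injective_iff.mpr ⟨hinj, fun ⟨i, hi⟩ => h0 i hi⟩, ?_⟩
    have := Fintype.one_lt_card (α := K)
    rw [Fintype.card_option, Fintype.card_fin]
    omega
  exact (sum_comp_esymmVal_eq_sum_multinomial_smul (Equiv.ofBijective _ enum_bijective) rfl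
    (fun v => Complex.exp (2 * Real.pi * Complex.I / p * (Algebra.trace (ZMod p) K v).val))
    n k).trans (sum_congr rfl fun _ _ => nsmul_eq_mul _ _)

/-- The exponential sum of `e_{n,k}` over the Galois field `F_q`, `q = p^r`, expressed as a
multinomial sum: the outer sum runs over all `(m_1, …, m_{q-1})` with `m_1 + ⋯ + m_{q-1} ≤ n`
(the nested sums `∑_{m_1=0}^{n} ∑_{m_2=0}^{n-m_1} ⋯`), and `m_0* = n - (m_1 + ⋯ + m_{q-1})`. -/
theorem stmt2 (p : ℕ) [Fact p.Prime] (r : ℕ) (hr : 0 < r) (n k : ℕ) (hk : k ≤ n)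
    (K : Type*) [Field K] [Fintype K] [Algebra (ZMod p) K]
    (hcard : Fintype.card K = p ^ r)
    (α : Fin (p ^ r - 1) → K)
    (hinj : Function.Injective α) (h0 : ∀ i, α i ≠ 0) :
    (∑ x : Fin n → K,
        Complex.exp (2 * (Real.pi : ℂ) * Complex.I / p *
          ((Algebra.trace (ZMod p) K (esymmVal n k x)).val : ℂ)))
      = ∑ m ∈ (Fintype.piFinset fun _ : Fin (p ^ r - 1) => Finset.range (n + 1)).filter
            (fun m => ∑ i, m i ≤ n),
          (Nat.multinomial Finset.univ
              (fun o : Option (Fin (p ^ r - 1)) => o.elim (n - ∑ i, m i) m) : ℂ) *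
            Complex.exp (2 * (Real.pi : ℂ) * Complex.I / p *
              ((Algebra.trace (ZMod p) K (Lam (p ^ r - 1) α m (k : ℤ))).val : ℂ)) :=
  stmt2_general p r n k K hcard α hinj h0
end
end

section
/- Let F: Z → Z be a periodic function with period D (i.e., F(j + D) = F(j) for all j ∈ Z), and let ξ be a complex number with ξ^D = 1 (not necessarily primitive). Let a be a complex number. Then for every natural number n, Σ_{l=0}^{n} C(n,l) · a^l · ξ^{F(l)} = (1/D) Σ_{t=0}^{D−1} ξ^{F(t)} Σ_{j=0}^{D−1} ξ_D^{tj} · λ_j^n, where ξ_D = exp(2πi/D) and λ_j = 1 + a·ξ_D^{−j}. -/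
/-!
Roots-of-unity filter. For a primitive `D`-th root of unity `ζ`, the sum
`∑_{j<D} ζ^{(t-l)j}` equals `D` when `D ∣ t - l` and `0` otherwise, so averaging a `D`-periodic
weight `G` against it recovers `G l`. Expanding `ζ^{tj} (1 + a ζ^{-j})^n` by the binomial theorem
produces exactly these sums, which turns the right-hand side into `∑_l C(n,l) a^l G l`.
-/

open Finset

section

variable {K : Type*} [Field K]

theorem pow_mul_one_add_mul_zpow_neg_pow {ζ : K} (hζ : ζ ≠ 0) (a : K) (t j n : ℕ) :
    ζ ^ (t * j) * (1 + a * ζ ^ (-(j : ℤ))) ^ n =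
      ∑ l ∈ range (n + 1), (n.choose l : K) * a ^ l * (ζ ^ ((t : ℤ) - l)) ^ j := by
  rw [add_comm, add_pow, mul_sum]
  refine sum_congr rfl fun l _ => ?_
  have hζpow : ζ ^ (t * j) * (ζ ^ (-(j : ℤ))) ^ l = (ζ ^ ((t : ℤ) - l)) ^ j := by
    rw [← zpow_natCast, ← zpow_natCast _ l, ← zpow_natCast _ j, ← zpow_mul, ← zpow_mul,
      ← zpow_add₀ hζ]
    congr 1
    push_cast
    ring
  rw [← hζpow, mul_pow, one_pow, mul_one]
  ring

namespace IsPrimitiveRoot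

variable {ζ : K} {D : ℕ}

theorem geom_sum_zpow (hζ : IsPrimitiveRoot ζ D) (m : ℤ) :
    ∑ j ∈ range D, (ζ ^ m) ^ j = if (D : ℤ) ∣ m then (D : K) else 0 := by
  split_ifs with hdvd
  · simp [(hζ.zpow_eq_one_iff_dvd m).mpr hdvd]
  · have hne : ζ ^ m ≠ 1 := fun h => hdvd ((hζ.zpow_eq_one_iff_dvd m).mp h)
    have hpow : (ζ ^ m) ^ D = 1 := by
      rw [← zpow_natCast, ← zpow_mul, mul_comm, zpow_mul, zpow_natCast, hζ.pow_eq_one, one_zpow]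
    rw [geom_sum_eq hne, hpow, sub_self, zero_div]

theorem sum_mul_geom_sum_zpow_sub (hζ : IsPrimitiveRoot ζ D) (hD : 0 < D) {G : ℤ → K}
    (hG : Function.Periodic G D) (l : ℤ) :
    ∑ t ∈ range D, G t * ∑ j ∈ range D, (ζ ^ ((t : ℤ) - l)) ^ j = D * G l := by
  have hD' : (0 : ℤ) < D := by exact_mod_cast hD
  set t₀ := (l % D).toNat
  have ht₀ : (t₀ : ℤ) = l % D := Int.toNat_of_nonneg (Int.emod_nonneg l hD'.ne')
  have hG₀ : G t₀ = G l := by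
    rw [ht₀, Int.emod_def, mul_comm]
    simpa using hG.sub_int_mul_eq (x := l) (l / D)
  simp only [hζ.geom_sum_zpow, mul_ite, mul_zero]
  have ht₀D : t₀ < D := by have := Int.emod_lt_of_pos l hD'; omega
  rw [sum_eq_single_of_mem t₀ (mem_range.mpr ht₀D)]
  · rw [if_pos ⟨-(l / D), by rw [ht₀, Int.emod_def]; ring⟩, hG₀, mul_comm]
  · intro t ht htne
    refine if_neg fun hdvd => htne ?_
    have : l % D = t % D := Int.modEq_iff_dvd.mpr hdvd
    have htD : (t : ℤ) < D := by exact_mod_cast mem_range.mp ht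
    have := Int.emod_eq_of_lt (Int.natCast_nonneg t) htD
    omega

theorem sum_choose_mul_pow_mul_periodic (hζ : IsPrimitiveRoot ζ D) (hD : 0 < D) {G : ℤ → K}
    (hG : Function.Periodic G D) (a : K) (n : ℕ) :
    ∑ l ∈ range (n + 1), (n.choose l : K) * a ^ l * G l =
      (1 / D) * ∑ t ∈ range D, G t *
        ∑ j ∈ range D, ζ ^ (t * j) * (1 + a * ζ ^ (-(j : ℤ))) ^ n := by
  have : NeZero D := ⟨hD.ne'⟩
  have hDK : (D : K) ≠ 0 := hζ.neZero'.out
  have hexpand : ∀ t : ℕ, G t * ∑ j ∈ range D, ζ ^ (t * j) * (1 + a * ζ ^ (-(j : ℤ))) ^ n =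
      ∑ l ∈ range (n + 1), (n.choose l : K) * a ^ l *
        (G t * ∑ j ∈ range D, (ζ ^ ((t : ℤ) - l)) ^ j) := fun t => by
    simp only [pow_mul_one_add_mul_zpow_neg_pow (hζ.ne_zero hD.ne'), mul_sum]
    rw [sum_comm]
    exact sum_congr rfl fun _ _ => sum_congr rfl fun _ _ => by ring
  simp only [hexpand]
  rw [sum_comm, mul_sum]
  refine sum_congr rfl fun l _ => ?_
  rw [← mul_sum, hζ.sum_mul_geom_sum_zpow_sub hD hG]
  field_simp

end IsPrimitiveRoot

end

theorem stmt7_general (D : ℕ) (hD : 0 < D) (F : ℤ → ℤ) (hF : ∀ j : ℤ, F (j + D) = F j)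
    (ξ : ℂ) (a : ℂ) (n : ℕ) :
    (∑ l ∈ Finset.range (n + 1), (n.choose l : ℂ) * a ^ l * ξ ^ F l)
      = (1 / D) * ∑ t ∈ Finset.range D, ξ ^ F t *
          ∑ j ∈ Finset.range D,
            Complex.exp (2 * (Real.pi : ℂ) * Complex.I / D) ^ (t * j) *
              (1 + a * Complex.exp (2 * (Real.pi : ℂ) * Complex.I / D) ^ (-(j : ℤ))) ^ n :=
  (Complex.isPrimitiveRoot_exp D hD.ne').sum_choose_mul_pow_mul_periodic hD
    (G := fun l => ξ ^ F l) (fun j => by simp only [hF]) a n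

/-- If `F : ℤ → ℤ` is periodic with period `D` and `ξ^D = 1`, then
`∑_{l=0}^n C(n,l) a^l ξ^{F(l)} = (1/D) ∑_{t=0}^{D-1} ξ^{F(t)} ∑_{j=0}^{D-1} ξ_D^{tj} λ_j^n`,
where `ξ_D = exp(2πi/D)` and `λ_j = 1 + a ξ_D^{-j}`. -/
theorem stmt7 (D : ℕ) (hD : 0 < D) (F : ℤ → ℤ) (hF : ∀ j : ℤ, F (j + D) = F j)
    (ξ : ℂ) (hξ : ξ ^ D = 1) (a : ℂ) (n : ℕ) :
    (∑ l ∈ Finset.range (n + 1), (n.choose l : ℂ) * a ^ l * ξ ^ F l)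
      = (1 / D) * ∑ t ∈ Finset.range D, ξ ^ F t *
          ∑ j ∈ Finset.range D,
            Complex.exp (2 * (Real.pi : ℂ) * Complex.I / D) ^ (t * j) *
              (1 + a * Complex.exp (2 * (Real.pi : ℂ) * Complex.I / D) ^ (-(j : ℤ))) ^ n :=
  stmt7_general D hD F hF ξ a n
end

section
/- Let F: Z → Z be a periodic function with period D, and let ξ be a complex number with ξ^D = 1 (not necessarily primitive). Then for every natural number n, Σ_{l=0}^{n} C(n,l) · ξ^{F(l)} = (1/D) Σ_{t=0}^{D−1} ξ^{F(t)} Σ_{j=0}^{D−1} ξ_D^{tj} · (1 + ξ_D^{−j})^n, where ξ_D = exp(2πi/D). -/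
/-!
Expanding `(1 + ω⁻ʲ)ⁿ` binomially, the inner sum over `j` becomes `∑ₗ C(n,l) ∑ⱼ ω^{j(t-l)}`,
and the roots-of-unity filter `∑ⱼ ω^{jm} = D·[D ∣ m]` keeps exactly the `l ≡ t (mod D)`.
Summing over `t` then picks `t = l % D`, and periodicity gives `ξ^{F(l % D)} = ξ^{F(l)}`.
-/

open Finset Function

theorem IsPrimitiveRoot.sum_range_zpow_mul {K : Type*} [Field K] {ω : K} {D : ℕ}
    (h : IsPrimitiveRoot ω D) (m : ℤ) :
    ∑ j ∈ range D, ω ^ ((j : ℤ) * m) = if (D : ℤ) ∣ m then (D : K) else 0 := by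
  simp_rw [mul_comm _ m, zpow_mul, zpow_natCast]
  split_ifs with hm
  · simp [(h.zpow_eq_one_iff_dvd m).mpr hm]
  · have hne : ω ^ m ≠ 1 := mt (h.zpow_eq_one_iff_dvd m).mp hm
    rw [geom_sum_eq hne, ← zpow_natCast, ← zpow_mul, mul_comm, zpow_mul, zpow_natCast,
      h.pow_eq_one, one_zpow, sub_self, zero_div]

theorem Function.Periodic.sum_range_ite_dvd_sub {M : Type*} [AddCommMonoid M] {g : ℕ → M}
    {D : ℕ} (hg : Periodic g D) (hD : 0 < D) (l : ℕ) :
    ∑ t ∈ range D, (if (D : ℤ) ∣ (t : ℤ) - l then g t else 0) = g l := by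
  have hmod : ∀ t ∈ range D, (D : ℤ) ∣ (t : ℤ) - l ↔ l % D = t := fun t ht => by
    rw [← Nat.modEq_iff_dvd, Nat.ModEq, Nat.mod_eq_of_lt (mem_range.mp ht)]
  rw [sum_congr rfl fun t ht => if_congr (hmod t ht) rfl rfl, sum_ite_eq,
    if_pos (mem_range.mpr (Nat.mod_lt l hD)), hg.map_mod_nat]

theorem IsPrimitiveRoot.sum_mul_of_periodic {K : Type*} [Field K] {ω : K} {D : ℕ}
    (h : IsPrimitiveRoot ω D) (hD : 0 < D) {g : ℕ → K} (hg : Periodic g D) (a : ℕ → K) (N : ℕ) :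
    ∑ l ∈ range N, a l * g l = (1 / D) * ∑ t ∈ range D, g t *
      ∑ j ∈ range D, ω ^ (t * j) * ∑ l ∈ range N, a l * (ω ^ (-(j : ℤ))) ^ l := by
  have hω : ω ≠ 0 := h.ne_zero hD.ne'
  have hDK : (D : K) ≠ 0 := by
    have : NeZero D := ⟨hD.ne'⟩
    exact h.neZero'.out
  have filter : ∀ t : ℕ,
      ∑ j ∈ range D, ω ^ (t * j) * ∑ l ∈ range N, a l * (ω ^ (-(j : ℤ))) ^ l
        = ∑ l ∈ range N, a l * if (D : ℤ) ∣ (t : ℤ) - l then (D : K) else 0 := by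
    intro t
    simp_rw [← h.sum_range_zpow_mul, mul_sum]
    rw [sum_comm]
    refine sum_congr rfl fun l _ => sum_congr rfl fun j _ => ?_
    rw [← zpow_natCast, ← zpow_natCast, ← zpow_mul, mul_left_comm, ← zpow_add₀ hω]
    congr 2
    push_cast
    ring
  have cancel : ∀ t l : ℕ,
      1 / (D : K) * (g t * (a l * if (D : ℤ) ∣ (t : ℤ) - l then (D : K) else 0))
        = a l * if (D : ℤ) ∣ (t : ℤ) - l then g t else 0 := by
    intro t l
    split_ifs
    · field_simp
    · simp
  simp_rw [filter, mul_sum, cancel]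
  rw [sum_comm]
  simp_rw [← mul_sum, hg.sum_range_ite_dvd_sub hD]

theorem stmt8_general (D : ℕ) (hD : 0 < D) (F : ℤ → ℤ) (hF : ∀ j : ℤ, F (j + D) = F j)
    (ξ : ℂ) (n : ℕ) :
    (∑ l ∈ Finset.range (n + 1), (n.choose l : ℂ) * ξ ^ F l)
      = (1 / D) * ∑ t ∈ Finset.range D, ξ ^ F t *
          ∑ j ∈ Finset.range D,
            Complex.exp (2 * (Real.pi : ℂ) * Complex.I / D) ^ (t * j) *
              (1 + Complex.exp (2 * (Real.pi : ℂ) * Complex.I / D) ^ (-(j : ℤ))) ^ n := by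
  have hg : Periodic (fun l : ℕ => ξ ^ F l) D := fun l => by
    simp only [Nat.cast_add, hF]
  have binomial : ∀ x : ℂ, (1 + x) ^ n = ∑ l ∈ range (n + 1), (n.choose l : ℂ) * x ^ l := by
    intro x
    rw [add_comm, add_pow]
    exact sum_congr rfl fun l _ => by ring
  simp_rw [binomial]
  exact (Complex.isPrimitiveRoot_exp D hD.ne').sum_mul_of_periodic hD hg _ _

/-- If `F : ℤ → ℤ` is periodic with period `D` and `ξ^D = 1`, then
`∑_{l=0}^n C(n,l) ξ^{F(l)} = (1/D) ∑_{t=0}^{D-1} ξ^{F(t)} ∑_{j=0}^{D-1} ξ_D^{tj} (1+ξ_D^{-j})^n`,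
where `ξ_D = exp(2πi/D)`. -/
theorem stmt8 (D : ℕ) (hD : 0 < D) (F : ℤ → ℤ) (hF : ∀ j : ℤ, F (j + D) = F j)
    (ξ : ℂ) (hξ : ξ ^ D = 1) (n : ℕ) :
    (∑ l ∈ Finset.range (n + 1), (n.choose l : ℂ) * ξ ^ F l)
      = (1 / D) * ∑ t ∈ Finset.range D, ξ ^ F t *
          ∑ j ∈ Finset.range D,
            Complex.exp (2 * (Real.pi : ℂ) * Complex.I / D) ^ (t * j) *
              (1 + Complex.exp (2 * (Real.pi : ℂ) * Complex.I / D) ^ (-(j : ℤ))) ^ n :=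
  stmt8_general D hD F hF ξ n
end

section
/- Let F: Z^r → Z be periodic in each component with common period D, let ξ be a complex number with ξ^D = 1, and define S(n) = Σ_{q_1=0}^{n} Σ_{q_2=0}^{n−q_1} ... Σ_{q_r=0}^{n−q_1−...−q_{r−1}} C(n,q_1) C(n−q_1,q_2) ··· C(n−q_1−...−q_{r−1}, q_r) · ξ^{F(q_1,...,q_r)}. Then the sequence (S(n)) satisfies the linear recurrence with integer coefficients whose characteristic polynomial is P_S(X) = Π_{a_1=0}^{D−1} Π_{0 ≤ a_2 ≤ a_1} ··· Π_{0 ≤ a_r ≤ a_{r−1}} (X − (1 + ξ_D^{a_1} + ... + ξ_D^{a_r})), where ξ_D = exp(2πi/D); i.e., P_S(X) has integer coefficients and, writing P_S(X) = X^d − c_1 X^{d−1} − ... − c_d, one has S(n+d) = c_1 S(n+d−1) + ... + c_d S(n) for all n ≥ 0. -/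
/-!
Since `F` is `D`-periodic in each variable, `x ↦ ξ ^ F x` is a function on `(ℤ/D)^r`, hence a
linear combination of characters `q ↦ ∏ zᵢ ^ qᵢ` with `zᵢ ^ D = 1`. By the multinomial theorem
the nested binomial sum of such a character is `(1 + ∑ zᵢ) ^ n`, so `S` is a linear combination
of geometric sequences. Writing `zᵢ = ξ_D ^ bᵢ` and sorting the `bᵢ` decreasingly shows that every
ratio `1 + ∑ zᵢ` is a root of the monic polynomial `P_S`, which gives the recurrence.
The coefficients of `P_S` are algebraic integers of `ℚ(ξ_D)`; a Galois automorphism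
`ξ_D ↦ ξ_D ^ k` (`k` prime to `D`) only permutes the sorted exponent tuples `a`, via
`a ↦ sort (k • a mod D)`, so the coefficients are rational, hence integers.
-/

open Polynomial Finset

lemma Fin.sum_Iio_succ {M : Type*} [AddCommMonoid M] {r : ℕ} (g : Fin (r + 1) → M)
    (i : Fin r) : ∑ j ∈ Iio i.succ, g j = g 0 + ∑ j ∈ Iio i, g j.succ := by
  simp only [← filter_gt_eq_Iio, sum_filter, Fin.sum_univ_succ, Fin.succ_pos, if_true,
    Fin.succ_lt_succ_iff]

def nestedChoose {r : ℕ} (n : ℕ) (q : Fin r → ℕ) : ℕ :=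
  ∏ i, (n - ∑ j ∈ Iio i, q j).choose (q i)

lemma nestedChoose_cons {r : ℕ} (n q₀ : ℕ) (q : Fin r → ℕ) :
    nestedChoose n (Fin.cons q₀ q : Fin (r + 1) → ℕ) = n.choose q₀ * nestedChoose (n - q₀) q := by
  have h0 : Iio (0 : Fin (r + 1)) = ∅ := Iio_eq_empty.2 isMin_bot
  simp [nestedChoose, Fin.prod_univ_succ, Fin.sum_Iio_succ, h0, Nat.sub_sub]

lemma sum_le_of_nestedChoose_ne_zero {r n : ℕ} {q : Fin r → ℕ} (hq : nestedChoose n q ≠ 0) :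
    ∑ i, q i ≤ n := by
  induction r generalizing n with
  | zero => simp
  | succ r ih =>
    rw [← Fin.cons_self_tail q, nestedChoose_cons, mul_ne_zero_iff] at hq
    have h₀ : q 0 ≤ n := by simpa [Nat.choose_eq_zero_iff] using hq.1
    have := ih hq.2
    rw [Fin.sum_univ_succ]
    simp only [Fin.tail] at this
    omega

lemma piFinset_const_succ {α : Type*} {r : ℕ} (s : Finset α) :
    Fintype.piFinset (fun _ : Fin (r + 1) => s) =
      (s ×ˢ Fintype.piFinset fun _ : Fin r => s).map (Fin.consEquiv fun _ => α).toEmbedding := by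
  have := filter_piFinset_eq_map_consEquiv (fun _ : Fin (r + 1) => s) (fun _ => True)
  simp only [filter_true] at this
  exact this

theorem sum_nestedChoose_mul_prod_pow_of_le {R : Type*} [CommSemiring R] {r n N : ℕ}
    (hn : n ≤ N) (x : Fin r → R) :
    ∑ q ∈ Fintype.piFinset (fun _ : Fin r => range (N + 1)),
        (nestedChoose n q : R) * ∏ i, x i ^ q i = (1 + ∑ i, x i) ^ n := by
  induction r generalizing n with
  | zero => simp [nestedChoose]
  | succ r ih =>
    have hslice : ∀ q₀ ∈ range (N + 1),
        ∑ q ∈ Fintype.piFinset (fun _ : Fin r => range (N + 1)),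
          (nestedChoose n (Fin.cons q₀ q : Fin (r + 1) → ℕ) : R) *
            ∏ i, x i ^ (Fin.cons q₀ q : Fin (r + 1) → ℕ) i
          = x 0 ^ q₀ * (1 + ∑ i : Fin r, x i.succ) ^ (n - q₀) * n.choose q₀ := by
      intro q₀ _
      simp_rw [nestedChoose_cons, Fin.prod_univ_succ, Fin.cons_zero, Fin.cons_succ]
      rw [← ih (n := n - q₀) (by omega) (fun i => x i.succ), mul_sum, sum_mul]
      refine sum_congr rfl fun q _ => ?_
      push_cast
      ring
    rw [piFinset_const_succ, sum_map, sum_product]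
    refine (sum_congr rfl hslice).trans ?_
    rw [Fin.sum_univ_succ, add_left_comm, add_pow]
    refine (sum_subset (range_subset_range.2 (by omega)) fun m _ hm => ?_).symm
    rw [Nat.choose_eq_zero_of_lt (by simpa using hm), Nat.cast_zero, mul_zero]

theorem sum_nestedChoose_mul_prod_pow {R : Type*} [CommSemiring R] {r : ℕ} (n : ℕ)
    (x : Fin r → R) :
    ∑ q ∈ (Fintype.piFinset fun _ : Fin r => range (n + 1)).filter (fun q => ∑ i, q i ≤ n),
        (nestedChoose n q : R) * ∏ i, x i ^ q i = (1 + ∑ i, x i) ^ n := by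
  rw [sum_filter_of_ne fun q _ hq => sum_le_of_nestedChoose_ne_zero fun h => hq (by simp [h])]
  exact sum_nestedChoose_mul_prod_pow_of_le le_rfl x

lemma AddChar.map_sum_eq_prod {ι A M : Type*} [AddCommMonoid A] [CommMonoid M]
    (ψ : AddChar A M) (s : Finset ι) (f : ι → A) : ψ (∑ i ∈ s, f i) = ∏ i ∈ s, ψ (f i) := by
  classical
  induction s using Finset.induction_on with
  | empty => simp
  | insert i s hi ih => rw [sum_insert hi, prod_insert hi, map_add_eq_mul, ih]

lemma AddChar.apply_natCast_eq_prod_pow {M : Type*} [CommMonoid M] {D r : ℕ}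
    (ψ : AddChar (Fin r → ZMod D) M) (q : Fin r → ℕ) :
    ψ (fun i => (q i : ZMod D)) = ∏ i, ψ (Pi.single i 1) ^ q i := by
  have hq : (fun i => (q i : ZMod D)) = ∑ i, q i • Pi.single i 1 := by
    ext j
    simp [Pi.single_apply]
  rw [hq, map_sum_eq_prod]
  simp_rw [map_nsmul_eq_pow]

lemma AddChar.apply_single_pow_eq_one {M : Type*} [CommMonoid M] {D r : ℕ}
    (ψ : AddChar (Fin r → ZMod D) M) (i : Fin r) : ψ (Pi.single i 1) ^ D = 1 := by
  rw [← map_nsmul_eq_pow, ← Pi.single_smul, nsmul_eq_mul, mul_one, ZMod.natCast_self,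
    Pi.single_zero, map_zero_eq_one]

lemma AddChar.eq_sum_complexBasis_repr {α : Type*} [AddCommGroup α] [Fintype α] (f : α → ℂ)
    (a : α) : f a = ∑ ψ, (complexBasis α).repr f ψ * ψ a := by
  simpa using (congr_fun ((complexBasis α).sum_repr f) a).symm

theorem sum_nestedChoose_mul_eq_sum_pow {D r : ℕ} [NeZero D] (G : (Fin r → ZMod D) → ℂ)
    (n : ℕ) :
    ∑ q ∈ (Fintype.piFinset fun _ : Fin r => range (n + 1)).filter (fun q => ∑ i, q i ≤ n),
        (nestedChoose n q : ℂ) * G (fun i => q i) =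
      ∑ ψ, (AddChar.complexBasis _).repr G ψ * (1 + ∑ i, ψ (Pi.single i 1)) ^ n := by
  simp_rw [← sum_nestedChoose_mul_prod_pow, mul_sum]
  rw [sum_comm]
  refine sum_congr rfl fun q _ => ?_
  rw [AddChar.eq_sum_complexBasis_repr G, mul_sum]
  refine sum_congr rfl fun ψ _ => ?_
  rw [AddChar.apply_natCast_eq_prod_pow]
  ring

lemma apply_add_smul_eq_of_periodic {β : Type*} {r D : ℕ} {F : (Fin r → ℤ) → β}
    (hF : ∀ (q : Fin r → ℤ) (j : Fin r), F (Function.update q j (q j + D)) = F q)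
    (x t : Fin r → ℤ) : F (x + (D : ℤ) • t) = F x := by
  have hsingle : ∀ (x : Fin r → ℤ) j (m : ℤ), F (x + Pi.single j (m * D)) = F x := by
    intro x j m
    have hper : Function.Periodic (fun s : ℤ => F (x + Pi.single j s)) D := fun s => by
      have : x + Pi.single j (s + D) =
          Function.update (x + Pi.single j s) j ((x + Pi.single j s : Fin r → ℤ) j + D) := by
        ext i
        by_cases h : i = j
        · subst h; simp [add_assoc]
        · simp [h]
      simp only [this, hF]
    simpa using hper.int_mul_eq m
  induction t using Pi.single_induction generalizing x with
  | zero => simp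
  | add f g hf hg => rw [smul_add, ← add_assoc, hg, hf]
  | single j m => rw [← Pi.single_smul, smul_eq_mul, mul_comm, hsingle]

lemma apply_zmod_val_eq_of_periodic {β : Type*} {r D : ℕ} {F : (Fin r → ℤ) → β}
    (hF : ∀ (q : Fin r → ℤ) (j : Fin r), F (Function.update q j (q j + D)) = F q)
    (q : Fin r → ℕ) : F (fun i => ((q i : ZMod D).val : ℤ)) = F (fun i => q i) := by
  rw [← apply_add_smul_eq_of_periodic hF _ fun i => (q i / D : ℕ)]
  congr 1
  ext i
  simp only [Pi.add_apply, Pi.smul_apply, smul_eq_mul, ZMod.val_natCast]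
  exact_mod_cast Nat.mod_add_div (q i) D

lemma Polynomial.Monic.pow_add_natDegree_of_isRoot {R : Type*} [CommRing R] {P : R[X]}
    (hP : P.Monic) {x : R} (hx : P.IsRoot x) (n : ℕ) :
    x ^ (n + P.natDegree) = ∑ m ∈ range P.natDegree, -P.coeff m * x ^ (n + m) := by
  have h := hx.eq_zero
  rw [hP.as_sum] at h
  simp only [eval_add, eval_pow, eval_X, eval_finsetSum, eval_mul, eval_C] at h
  rw [pow_add, eq_neg_of_add_eq_zero_left h, mul_neg, mul_sum, ← sum_neg_distrib]
  refine sum_congr rfl fun m _ => ?_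
  ring

lemma Polynomial.Monic.sum_mul_pow_add_natDegree {R ι : Type*} [CommRing R] {P : R[X]}
    (hP : P.Monic) (s : Finset ι) (β x : ι → R) (hx : ∀ j ∈ s, P.IsRoot (x j)) (n : ℕ) :
    ∑ j ∈ s, β j * x j ^ (n + P.natDegree) =
      ∑ m ∈ range P.natDegree, -P.coeff m * ∑ j ∈ s, β j * x j ^ (n + m) := by
  simp_rw [mul_sum]
  rw [sum_comm]
  refine sum_congr rfl fun j hj => ?_
  rw [hP.pow_add_natDegree_of_isRoot (hx j hj), mul_sum]
  refine sum_congr rfl fun m _ => ?_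
  ring

section AntitoneTuples

variable {α : Type*} [LinearOrder α] {r : ℕ}

def antitoneTuples (s : Finset α) (r : ℕ) : Finset (Fin r → α) :=
  (Fintype.piFinset fun _ => s).filter fun a => ∀ i i' : Fin r, i ≤ i' → a i' ≤ a i

lemma mem_antitoneTuples {s : Finset α} {a : Fin r → α} :
    a ∈ antitoneTuples s r ↔ (∀ i, a i ∈ s) ∧ Antitone a := by
  simp [antitoneTuples, Antitone]

def antitonePerm (b : Fin r → α) : Equiv.Perm (Fin r) :=
  Fin.revPerm.trans (Tuple.sort b)

lemma antitone_comp_antitonePerm (b : Fin r → α) : Antitone (b ∘ antitonePerm b) :=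
  (Tuple.monotone_sort b).comp_antitone Fin.rev_anti

lemma Antitone.eq_of_comp_perm_eq {a a' : Fin r → α} (ha : Antitone a) (ha' : Antitone a')
    {π π' : Equiv.Perm (Fin r)} (h : a ∘ π = a' ∘ π') : a = a' := by
  have ha'' : a = a' ∘ (π.symm.trans π') := by
    ext i
    simpa using congr_fun h (π.symm i)
  rw [ha''] at ha ⊢
  exact Tuple.unique_antitone (σ := π.symm.trans π') (τ := 1) ha ha'

theorem prod_antitoneTuples_comp {M : Type*} [CommMonoid M] {s : Finset α} {e : α → α}
    (hmaps : Set.MapsTo e s s) (hinj : Set.InjOn e s) {h : (Fin r → α) → M}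
    (hh : ∀ (b : Fin r → α) (π : Equiv.Perm (Fin r)), h (b ∘ π) = h b) :
    ∏ a ∈ antitoneTuples s r, h (e ∘ a) = ∏ a ∈ antitoneTuples s r, h a := by
  set sortComp : (Fin r → α) → Fin r → α := fun a => e ∘ a ∘ antitonePerm (e ∘ a)
  have hmem : ∀ a ∈ antitoneTuples s r, sortComp a ∈ antitoneTuples s r := fun a ha =>
    mem_antitoneTuples.2 ⟨fun i => hmaps (mem_antitoneTuples.1 ha |>.1 _),
      antitone_comp_antitonePerm (e ∘ a)⟩
  have hinj' : Set.InjOn sortComp (antitoneTuples s r) := by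
    intro a ha a' ha' haa'
    obtain ⟨has, hanti⟩ := mem_antitoneTuples.1 ha
    obtain ⟨has', hanti'⟩ := mem_antitoneTuples.1 ha'
    refine hanti.eq_of_comp_perm_eq hanti' (π := antitonePerm (e ∘ a))
      (π' := antitonePerm (e ∘ a')) (funext fun i => hinj (has _) (has' _) ?_)
    exact congr_fun haa' i
  have himage : (antitoneTuples s r).image sortComp = antitoneTuples s r :=
    eq_of_subset_of_card_le (image_subset_iff.2 hmem) (card_image_of_injOn hinj').ge
  calc ∏ a ∈ antitoneTuples s r, h (e ∘ a)
      = ∏ a ∈ antitoneTuples s r, h (sortComp a) := prod_congr rfl fun a _ => (hh _ _).symm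
    _ = ∏ a ∈ antitoneTuples s r, h a := by rw [← prod_image hinj', himage]

end AntitoneTuples

theorem IsPrimitiveRoot.isRoot_prod_antitoneTuples {K : Type*} [CommRing K] [IsDomain K]
    {D r : ℕ} [NeZero D] {ξ : K} (hξ : IsPrimitiveRoot ξ D) {z : Fin r → K}
    (hz : ∀ i, z i ^ D = 1) :
    (∏ a ∈ antitoneTuples (range D) r, (X - C (1 + ∑ j, ξ ^ a j))).IsRoot (1 + ∑ i, z i) := by
  choose b hbD hb using fun i => hξ.eq_pow_of_pow_eq_one (hz i)
  have hmem : b ∘ antitonePerm b ∈ antitoneTuples (range D) r :=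
    mem_antitoneTuples.2 ⟨fun i => mem_range.2 (hbD _), antitone_comp_antitonePerm b⟩
  rw [IsRoot, eval_prod]
  refine prod_eq_zero hmem ?_
  simp only [eval_sub, eval_X, eval_C, Function.comp_apply, hb,
    Equiv.sum_comp (antitonePerm b) z, sub_self]

lemma Polynomial.isIntegral_coeff_prod_X_sub_C {R K ι : Type*} [CommRing R] [CommRing K]
    [Algebra R K] {s : Finset ι} {f : ι → K} (hf : ∀ i ∈ s, IsIntegral R (f i)) (n : ℕ) :
    IsIntegral R ((∏ i ∈ s, (X - C (f i))).coeff n) := by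
  have hlifts : ∏ i ∈ s, (X - C (f i)) ∈ lifts (algebraMap (integralClosure R K) K) := by
    rw [lifts_iff_liftsRing]
    refine Subring.prod_mem _ fun i hi => Subring.sub_mem _ ?_ ?_
    · exact (lifts_iff_liftsRing _ _).1 (X_mem_lifts _)
    · exact (lifts_iff_liftsRing _ _).1 (C'_mem_lifts ⟨⟨f i, hf i hi⟩, rfl⟩)
  obtain ⟨y, hy⟩ := (lifts_iff_coeff_lifts _).1 hlifts n
  exact hy ▸ y.2

theorem exists_intCast_eq_of_isIntegral_of_forall_algEquiv {K : Type*} [Field K] [Algebra ℚ K]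
    [FiniteDimensional ℚ K] [IsGalois ℚ K] {x : K} (hx : IsIntegral ℤ x)
    (hfix : ∀ σ : K ≃ₐ[ℚ] K, σ x = x) : ∃ z : ℤ, x = z := by
  obtain ⟨q, rfl⟩ := (IsGalois.mem_range_algebraMap_iff_fixed x).2 hfix
  obtain ⟨z, rfl⟩ := IsIntegrallyClosed.isIntegral_iff.1 ((isIntegral_algebraMap_iff
    (algebraMap ℚ K).injective).1 hx)
  exact ⟨z, by simp⟩

theorem IsPrimitiveRoot.map_prod_antitoneTuples {K : Type*} [CommRing K] [IsDomain K] {D : ℕ}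
    [NeZero D] {ζ : K} (hζ : IsPrimitiveRoot ζ D) {σ : K →+* K} (hσ : Function.Injective σ)
    (r : ℕ) :
    (∏ a ∈ antitoneTuples (range D) r, (X - C (1 + ∑ j, ζ ^ a j))).map σ =
      ∏ a ∈ antitoneTuples (range D) r, (X - C (1 + ∑ j, ζ ^ a j)) := by
  obtain ⟨k, -, hkD, hk⟩ := hζ.isPrimitiveRoot_iff.1 (hζ.map_of_injective hσ)
  have hmaps : Set.MapsTo (fun m => k * m % D) (range D) (range D) := fun m _ =>
    mem_range.2 (Nat.mod_lt _ (NeZero.pos D))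
  have hinj : Set.InjOn (fun m => k * m % D) (range D) := fun m hm m' hm' h => by
    have := Nat.ModEq.cancel_left_of_coprime hkD.symm h
    rwa [Nat.ModEq, Nat.mod_eq_of_lt (mem_range.1 hm), Nat.mod_eq_of_lt (mem_range.1 hm')] at this
  have hσpow : ∀ m, σ (ζ ^ m) = ζ ^ (k * m % D) := fun m => by
    rw [map_pow, ← hk, ← pow_mul, hζ.eq_orderOf, pow_mod_orderOf]
  rw [Polynomial.map_prod]
  calc _ = ∏ a ∈ antitoneTuples (range D) r,
        (X - C (1 + ∑ j, ζ ^ ((fun m => k * m % D) ∘ a) j)) :=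
        prod_congr rfl fun a _ => by
          rw [Polynomial.map_sub, Polynomial.map_X, Polynomial.map_C, map_add, map_one, map_sum]
          simp only [hσpow, Function.comp_apply]
    _ = _ := prod_antitoneTuples_comp (h := fun b => X - C (1 + ∑ j, ζ ^ b j)) hmaps hinj
        fun b π => by simp only [Function.comp_apply, Equiv.sum_comp π fun j => ζ ^ b j]

theorem exists_intCast_eq_coeff_prod_antitoneTuples {L : Type*} [Field L] [CharZero L] {D : ℕ}
    [NeZero D] {ξ : L} (hξ : IsPrimitiveRoot ξ D) (r n : ℕ) :
    ∃ z : ℤ, (∏ a ∈ antitoneTuples (range D) r, (X - C (1 + ∑ j, ξ ^ a j))).coeff n = (z : L) := by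
  let K := IntermediateField.adjoin ℚ {ξ}
  have : IsCyclotomicExtension {D} ℚ K :=
    (IntermediateField.isCyclotomicExtension_singleton_iff_eq_adjoin D ℚ L K hξ).2 rfl
  have := IsCyclotomicExtension.isGalois {D} ℚ K
  have := IsCyclotomicExtension.finiteDimensional {D} ℚ K
  let ζ : K := IntermediateField.AdjoinSimple.gen ℚ ξ
  have hζ : IsPrimitiveRoot ζ D :=
    .of_map_of_injective (f := algebraMap K L)
      (by rwa [IntermediateField.AdjoinSimple.algebraMap_gen]) (algebraMap K L).injective
  have hmap : (∏ a ∈ antitoneTuples (range D) r, (X - C (1 + ∑ j, ζ ^ a j))).map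
      (algebraMap K L) = ∏ a ∈ antitoneTuples (range D) r, (X - C (1 + ∑ j, ξ ^ a j)) := by
    rw [Polynomial.map_prod]
    refine prod_congr rfl fun a _ => ?_
    rw [Polynomial.map_sub, Polynomial.map_X, Polynomial.map_C]
    simp [ζ]
  have hint : ∀ a : Fin r → ℕ, IsIntegral ℤ (1 + ∑ j, ζ ^ a j) := fun a =>
    isIntegral_one.add (IsIntegral.sum _ fun j _ => (hζ.isIntegral (NeZero.pos D)).pow _)
  obtain ⟨z, hz⟩ := exists_intCast_eq_of_isIntegral_of_forall_algEquiv
    (isIntegral_coeff_prod_X_sub_C (fun a _ => hint a) n) fun σ => by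
      simpa only [coeff_map, RingHom.coe_coe] using
        congr_arg (coeff · n) (hζ.map_prod_antitoneTuples (σ := (σ : K →+* K)) σ.injective r)
  exact ⟨z, by rw [← hmap, coeff_map, hz, map_intCast]⟩

theorem stmt11_general (D : ℕ) (hD : 0 < D) (r : ℕ) (F : (Fin r → ℤ) → ℤ)
    (hF : ∀ (q : Fin r → ℤ) (j : Fin r), F (Function.update q j (q j + D)) = F q)
    (ξ : ℂ)
    (ξD : ℂ) (hξD : ξD = Complex.exp (2 * (Real.pi : ℂ) * Complex.I / D))
    (S : ℕ → ℂ)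
    (hS : ∀ n, S n =
      ∑ q ∈ (Fintype.piFinset fun _ : Fin r => Finset.range (n + 1)).filter
          (fun q => ∑ i, q i ≤ n),
        (∏ i : Fin r, ((n - ∑ j ∈ Finset.Iio i, q j).choose (q i) : ℂ)) *
          ξ ^ F (fun i => (q i : ℤ)))
    (A : Finset (Fin r → ℕ))
    (hA : A = (Fintype.piFinset fun _ : Fin r => Finset.range D).filter
      (fun a => ∀ i i' : Fin r, i ≤ i' → a i' ≤ a i))
    (P : Polynomial ℂ)
    (hP : P = ∏ a ∈ A, (X - C (1 + ∑ i : Fin r, ξD ^ (a i))))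
    (d : ℕ) (hd : d = A.card) :
    (∀ i, ∃ z : ℤ, P.coeff i = (z : ℂ)) ∧
      ∀ n : ℕ, S (n + d) = ∑ m ∈ Finset.range d, (-(P.coeff m)) * S (n + m) := by
  have : NeZero D := ⟨hD.ne'⟩
  have hξD' : IsPrimitiveRoot ξD D := hξD ▸ Complex.isPrimitiveRoot_exp D hD.ne'
  replace hA : A = antitoneTuples (range D) r := hA
  subst hA
  let G : (Fin r → ZMod D) → ℂ := fun x => ξ ^ F fun i => ((x i).val : ℤ)
  have hSG : ∀ n, S n = ∑ ψ, (AddChar.complexBasis _).repr G ψ *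
      (1 + ∑ i, ψ (Pi.single i 1)) ^ n := fun n => by
    rw [hS, ← sum_nestedChoose_mul_eq_sum_pow]
    refine sum_congr rfl fun q _ => ?_
    simp only [nestedChoose, Nat.cast_prod, G, apply_zmod_val_eq_of_periodic hF]
  have hmonic : P.Monic := hP ▸ monic_prod_of_monic _ _ fun a _ => monic_X_sub_C _
  have hdeg : P.natDegree = d := by
    rw [hP, natDegree_prod_of_monic _ _ fun a _ => monic_X_sub_C _, hd]
    simp only [natDegree_X_sub_C, sum_const, smul_eq_mul, mul_one]
  refine ⟨hP ▸ exists_intCast_eq_coeff_prod_antitoneTuples hξD' r, fun n => ?_⟩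
  simp_rw [hSG, ← hdeg]
  exact hmonic.sum_mul_pow_add_natDegree _ _ _
    (fun ψ _ => hP ▸ hξD'.isRoot_prod_antitoneTuples ψ.apply_single_pow_eq_one) n

/-- The sequence `S(n)` of multinomial sums satisfies the linear recurrence with integer
coefficients whose characteristic polynomial is
`P_S(X) = ∏_{a_1=0}^{D-1} ∏_{0≤a_2≤a_1} ⋯ ∏_{0≤a_r≤a_{r-1}} (X - (1 + ξ_D^{a_1} + ⋯ + ξ_D^{a_r}))`:
`P_S` has integer coefficients, and writing `P_S(X) = X^d - c_1 X^{d-1} - ⋯ - c_d`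
(so `c_i = -(coeff of P_S at degree d - i)`), one has
`S(n+d) = c_1 S(n+d-1) + ⋯ + c_d S(n)` for all `n ≥ 0`. -/
theorem stmt11 (D : ℕ) (hD : 0 < D) (r : ℕ) (F : (Fin r → ℤ) → ℤ)
    (hF : ∀ (q : Fin r → ℤ) (j : Fin r), F (Function.update q j (q j + D)) = F q)
    (ξ : ℂ) (hξ : ξ ^ D = 1)
    (ξD : ℂ) (hξD : ξD = Complex.exp (2 * (Real.pi : ℂ) * Complex.I / D))
    (S : ℕ → ℂ)
    (hS : ∀ n, S n =
      ∑ q ∈ (Fintype.piFinset fun _ : Fin r => Finset.range (n + 1)).filter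
          (fun q => ∑ i, q i ≤ n),
        (∏ i : Fin r, ((n - ∑ j ∈ Finset.Iio i, q j).choose (q i) : ℂ)) *
          ξ ^ F (fun i => (q i : ℤ)))
    (A : Finset (Fin r → ℕ))
    (hA : A = (Fintype.piFinset fun _ : Fin r => Finset.range D).filter
      (fun a => ∀ i i' : Fin r, i ≤ i' → a i' ≤ a i))
    (P : Polynomial ℂ)
    (hP : P = ∏ a ∈ A, (X - C (1 + ∑ i : Fin r, ξD ^ (a i))))
    (d : ℕ) (hd : d = A.card) :
    (∀ i, ∃ z : ℤ, P.coeff i = (z : ℂ)) ∧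
      ∀ n : ℕ, S (n + d) = ∑ m ∈ Finset.range d, (-(P.coeff m)) * S (n + m) :=
  stmt11_general D hD r F hF ξ ξD hξD S hS A hA P hP d hd
end

section
/- Let n be a positive integer and k > 1 a positive integer, p a prime, q = p^r with r ≥ 1, and D = p^{⌊log_p(k)⌋+1}. Then S_{F_q}(e_{n,k}) = Σ_{j_1=0}^{D−1} Σ_{j_2=0}^{j_1} ... Σ_{j_{q−1}=0}^{j_{q−2}} c_{j_1,...,j_{q−1}}(k) · (1 + ξ_D^{−j_1} + ... + ξ_D^{−j_{q−1}})^n, where c_{j_1,...,j_{q−1}}(k) = (1/D^{q−1}) Σ_{b_{q−1}=0}^{D−1} ... Σ_{b_1=0}^{D−1} ξ_p^{Tr(F^{(p)}_{k;F_q}(b_1,...,b_{q−1}))} Σ_{(j_1',...,j_{q−1}') ∈ Sym(j_1,...,j_{q−1})} ξ_D^{j_1' b_{q−1} + ... + j_{q−1}' b_1}, with ξ_m = exp(2πi/m), Tr = Tr_{F_q/F_p}, F_q = {0, α_1, ..., α_{q−1}}, and F^{(p)}_{k;F_q}(m_1,...,m_{q−1}) = Λ^{(p)}_{α_1,...,α_{q−1}}(k,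 m_1, ..., m_{q−1}). -/
noncomputable section

/-- The paper's `m⁺`. -/
def mplus (D : ℕ) (m : ℤ) : ℤ := if 0 < m then m else m + ((-m) / (D : ℤ) + 1) * D

/-
Expanding `∏ₜ (1 + xₜ X)` and grouping its factors by the value of `xₜ` gives
`e_{n,k}(x) = Λ_α(k, m(x))`, where `mᵢ(x)` counts the coordinates of `x` equal to `αᵢ`.
In characteristic `p` we have `(1 + aX)^D = 1 + a^D X^D`, so for `k < D` this coefficient
only depends on `m(x) mod D`. Fourier inversion on `(ℤ/D)^(q-1)` writes any function of
`m(x) mod D` as a combination of the characters `∏ᵢ ξ_D^(-jᵢ mᵢ(x))`, and by the multinomial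
theorem such a character sums over `x` to `(1 + ∑ᵢ ξ_D^(-jᵢ))^n`. This power only depends on
the multiset of the `jᵢ`, so the terms are finally grouped according to the decreasing
rearrangement of `j`.
-/

namespace EsymmExpSum

open Polynomial Finset

section Lam

variable {R : Type*} [CommRing R]

def lamPoly {l : ℕ} (a : Fin l → R) (m : Fin l → ℕ) : R[X] :=
  ∏ i, (1 + C (a i) * X) ^ m i

theorem lam_eq_zero_of_neg :
    ∀ {l : ℕ} (a : Fin l → R) (m : Fin l → ℕ) {k : ℤ}, k < 0 → Lam l a m k = 0
  | 0, _, _, _, hk => by simp [Lam, hk.ne]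
  | l + 1, _, _, _, hk =>
      sum_eq_zero fun _ _ => by rw [lam_eq_zero_of_neg _ _ (by omega), mul_zero]

theorem one_add_C_mul_X_pow (a : R) (m : ℕ) :
    (1 + C a * X) ^ m = ∑ j ∈ range (m + 1), C ((m.choose j : R) * a ^ j) * X ^ j := by
  rw [add_comm, add_pow]
  refine sum_congr rfl fun j _ => ?_
  rw [one_pow, mul_one, mul_pow, ← C_pow, ← C_eq_natCast, C_mul]
  ring

theorem lam_eq_coeff_lamPoly :
    ∀ {l : ℕ} (a : Fin l → R) (m : Fin l → ℕ) (k : ℕ),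
      Lam l a m k = (lamPoly a m).coeff k
  | 0, _, _, k => by simp [Lam, lamPoly, coeff_one]
  | l + 1, a, m, k => by
      rw [Lam, lamPoly, Fin.prod_univ_castSucc, ← lamPoly, one_add_C_mul_X_pow, mul_sum,
        finsetSum_coeff]
      refine sum_congr rfl fun j _ => ?_
      rw [mul_left_comm, coeff_C_mul, coeff_mul_X_pow']
      split_ifs with hjk
      · rw [← lam_eq_coeff_lamPoly, Nat.cast_sub hjk]
      · rw [lam_eq_zero_of_neg _ _ (by omega), mul_zero]

theorem coeff_zero_lamPoly {l : ℕ} (a : Fin l → R) (m : Fin l → ℕ) :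
    (lamPoly a m).coeff 0 = 1 := by
  simp [lamPoly, coeff_zero_eq_eval_zero, eval_prod]

theorem esymmVal_eq_coeff_prod (n k : ℕ) (x : Fin n → R) :
    esymmVal n k x = (∏ t, (1 + C (x t) * X)).coeff k := by
  simp_rw [add_comm (1 : R[X]), Fintype.prod_add, prod_const_one, mul_one, finsetSum_coeff,
    prod_mul_distrib, prod_const, ← map_prod, coeff_C_mul_X_pow]
  rw [esymmVal, powersetCard_eq_filter, sum_filter]
  exact sum_congr rfl fun s _ => by simp [eq_comm]

end Lam

section CharP

variable {R : Type*} [CommRing R]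

theorem coeff_mul_expand_of_lt (A B : R[X]) {D k : ℕ} (hk : k < D) (hB : B.coeff 0 = 1) :
    (A * expand R D B).coeff k = A.coeff k := by
  have hD : 0 < D := by omega
  rw [coeff_mul, sum_eq_single (k, 0)]
  · simp [coeff_expand hD, hB]
  · rintro ⟨u, v⟩ huv hne
    simp only [HasAntidiagonal.mem_antidiagonal] at huv
    have hv : ¬ D ∣ v := fun hdvd => hne <| by
      obtain rfl : v = 0 := Nat.eq_zero_of_dvd_of_lt hdvd (by omega)
      simp_all
    simp [coeff_expand hD, hv]
  · simp

variable (p : ℕ) [ExpChar R p]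

theorem lamPoly_eq_mul_expand {l : ℕ} (a : Fin l → R) (m : Fin l → ℕ) (s : ℕ) :
    lamPoly a m = lamPoly a (fun i => m i % p ^ s)
      * expand R (p ^ s) (lamPoly (fun i => a i ^ p ^ s) (fun i => m i / p ^ s)) := by
  rw [lamPoly, lamPoly, lamPoly, map_prod, ← prod_mul_distrib]
  refine prod_congr rfl fun i _ => ?_
  rw [map_pow, map_add, map_one, map_mul, expand_C, expand_X, C_pow, ← mul_pow,
    show 1 + (C (a i) * X) ^ p ^ s = (1 + C (a i) * X) ^ p ^ s by
      rw [add_pow_expChar_pow, one_pow],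
    ← pow_mul, ← pow_add, Nat.mod_add_div]

theorem lam_congr_mod {l s k : ℕ} (hk : k < p ^ s) (a : Fin l → R) {m m' : Fin l → ℕ}
    (h : ∀ i, m i % p ^ s = m' i % p ^ s) : Lam l a m k = Lam l a m' k := by
  rw [lam_eq_coeff_lamPoly, lam_eq_coeff_lamPoly, lamPoly_eq_mul_expand p _ m s,
    lamPoly_eq_mul_expand p _ m' s, coeff_mul_expand_of_lt _ _ hk (coeff_zero_lamPoly _ _),
    coeff_mul_expand_of_lt _ _ hk (coeff_zero_lamPoly _ _), funext h]

end CharP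

theorem toNat_mplus_mod {D b : ℕ} (hb : b < D) : (mplus D b).toNat % D = b := by
  rcases b.eq_zero_or_pos with rfl | hb0
  · simp [mplus]
  · simp [mplus, hb0, Nat.mod_eq_of_lt hb]

section Counting

theorem prod_comp_eq_prod_pow_card {ι β M : Type*} [Fintype ι] [Fintype β] [DecidableEq β]
    [CommMonoid M] (x : ι → β) (f : β → M) :
    ∏ t, f (x t) = ∏ c, f c ^ #{t | x t = c} := by
  simp_rw [← prod_fiberwise' univ x f, prod_const]

variable {K : Type*} [Fintype K] [Zero K] {l : ℕ} {α : Fin l → K}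

@[to_additive]
theorem prod_univ_eq_mul_prod_comp (hinj : Function.Injective α) (h0 : ∀ i, α i ≠ 0)
    (hcard : Fintype.card K = l + 1) {M : Type*} [CommMonoid M] (f : K → M) :
    ∏ c, f c = f 0 * ∏ i, f (α i) := by
  classical
  have h0' : (0 : K) ∉ univ.map ⟨α, hinj⟩ := by simpa using h0
  have huniv : (univ : Finset K) = insert 0 (univ.map ⟨α, hinj⟩) :=
    (eq_of_subset_of_card_le (subset_univ _) (by simp [card_insert_of_notMem h0', hcard])).symm
  rw [huniv, prod_insert h0', prod_map]
  rfl

variable [DecidableEq K]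

theorem sum_prod_pow_card_eq_one_add_sum_pow (hinj : Function.Injective α) (h0 : ∀ i, α i ≠ 0)
    (hcard : Fintype.card K = l + 1) {R : Type*} [CommSemiring R] (n : ℕ) (v : Fin l → R) :
    ∑ x : Fin n → K, ∏ i, v i ^ #{t | x t = α i} = (1 + ∑ i, v i) ^ n := by
  set w : K → R := Function.extend α v 1
  have hw : ∀ i, w (α i) = v i := hinj.extend_apply v 1
  have hw0 : w 0 = 1 := Function.extend_apply' _ _ _ fun ⟨i, hi⟩ => h0 i hi
  calc ∑ x : Fin n → K, ∏ i, v i ^ #{t | x t = α i}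
      = ∑ x : Fin n → K, ∏ t, w (x t) := by
        simp_rw [prod_comp_eq_prod_pow_card _ w, prod_univ_eq_mul_prod_comp hinj h0 hcard, hw0,
          one_pow, one_mul, hw]
    _ = (1 + ∑ i, v i) ^ n := by
        rw [← Fintype.sum_pow, sum_univ_eq_add_sum_comp hinj h0 hcard, hw0]
        simp_rw [hw]

end Counting

theorem esymmVal_eq_lam_card {K : Type*} [CommRing K] [Fintype K] [DecidableEq K] {l : ℕ}
    {α : Fin l → K} (hinj : Function.Injective α) (h0 : ∀ i, α i ≠ 0)
    (hcard : Fintype.card K = l + 1) (n k : ℕ) (x : Fin n → K) :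
    esymmVal n k x = Lam l α (fun i => #{t | x t = α i}) k := by
  rw [esymmVal_eq_coeff_prod, lam_eq_coeff_lamPoly, lamPoly,
    prod_comp_eq_prod_pow_card x (fun c => 1 + C c * X), prod_univ_eq_mul_prod_comp hinj h0 hcard]
  simp

section Fourier

variable {F : Type*} [Field F] {D : ℕ} {ξ : F}

theorem sum_range_zpow_pow (hξ : IsPrimitiveRoot ξ D) (t : ℤ) :
    ∑ j ∈ range D, (ξ ^ t) ^ j = if (D : ℤ) ∣ t then (D : F) else 0 := by
  split_ifs with h
  · simp [(hξ.zpow_eq_one_iff_dvd t).2 h]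
  · have hne : ξ ^ t ≠ 1 := fun h1 => h ((hξ.zpow_eq_one_iff_dvd t).1 h1)
    rw [geom_sum_eq hne, ← zpow_natCast, ← zpow_mul, mul_comm, zpow_mul, zpow_natCast,
      hξ.pow_eq_one, one_zpow, sub_self, zero_div]

theorem sum_piFinset_pow_mul_prod_zpow {l : ℕ} (hξ : IsPrimitiveRoot ξ D)
    (hD : 0 < D) (b m : Fin l → ℕ) :
    ∑ j ∈ Fintype.piFinset fun _ : Fin l => range D,
        ξ ^ (∑ i, j i * b i) * ∏ i, (ξ ^ (-(j i : ℤ))) ^ m i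
      = if ∀ i, (D : ℤ) ∣ (b i : ℤ) - m i then (D : F) ^ l else 0 := by
  have hξ0 : ξ ≠ 0 := hξ.ne_zero hD.ne'
  have hterm (j b m : ℕ) : ξ ^ (j * b) * (ξ ^ (-(j : ℤ))) ^ m = (ξ ^ ((b : ℤ) - m)) ^ j := by
    rw [← zpow_natCast (ξ ^ _) j, ← zpow_natCast (ξ ^ _) m, ← zpow_natCast ξ, ← zpow_mul,
      ← zpow_mul, ← zpow_add₀ hξ0]
    congr 1
    push_cast
    ring
  simp_rw [← prod_pow_eq_pow_sum, ← prod_mul_distrib, hterm, ← prod_univ_sum,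
    sum_range_zpow_pow hξ]
  split_ifs with h
  · simp [h]
  · push Not at h
    obtain ⟨i, hi⟩ := h
    exact prod_eq_zero (mem_univ i) (if_neg hi)

theorem apply_mod_eq_fourier_sum {l : ℕ} (hξ : IsPrimitiveRoot ξ D) (hD : 0 < D)
    (f : (Fin l → ℕ) → F) (m : Fin l → ℕ) :
    f (fun i => m i % D) = ∑ j ∈ Fintype.piFinset fun _ : Fin l => range D,
      ((D : F) ^ l)⁻¹ * (∑ b ∈ Fintype.piFinset fun _ : Fin l => range D,
        f b * ξ ^ (∑ i, j i * b i)) * ∏ i, (ξ ^ (-(j i : ℤ))) ^ m i := by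
  have hDF : (D : F) ≠ 0 := by
    have := NeZero.of_pos hD
    exact hξ.neZero'.out
  simp_rw [mul_assoc, ← mul_sum, sum_mul, mul_assoc]
  rw [sum_comm]
  simp_rw [← mul_sum, sum_piFinset_pow_mul_prod_zpow hξ hD]
  rw [sum_eq_single_of_mem (fun i => m i % D) (by simp [Nat.mod_lt _ hD])]
  · rw [if_pos fun i => ?_, mul_comm (f _), inv_mul_cancel_left₀ (pow_ne_zero _ hDF)]
    exact Int.modEq_iff_dvd.1 (Int.natCast_modEq_iff.2 (Nat.mod_modEq _ _).symm)
  · intro b hb hne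
    have hb' : ¬ ∀ i, (D : ℤ) ∣ (b i : ℤ) - m i := fun h => hne <| funext fun i => by
      have hmod : m i ≡ b i [MOD D] := Int.natCast_modEq_iff.1 (Int.modEq_iff_dvd.2 (h i))
      rw [hmod, Nat.mod_eq_of_lt (mem_range.1 (Fintype.mem_piFinset.1 hb i))]
    simp [hb']

end Fourier

section Sorting

variable {β : Type*} [LinearOrder β] {l : ℕ}

def sortDesc (j : Fin l → β) : Fin l → β := j ∘ Tuple.sort j ∘ Fin.rev

theorem sortDesc_eq_comp_perm (j : Fin l → β) :
    sortDesc j = j ∘ ⇑(Fin.revPerm.trans (Tuple.sort j)) := rfl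

theorem antitone_sortDesc (j : Fin l → β) : Antitone (sortDesc j) :=
  fun _ _ hab => Tuple.monotone_sort j (Fin.rev_le_rev.2 hab)

theorem sum_comp_sortDesc {M : Type*} [AddCommMonoid M] (j : Fin l → β) (f : β → M) :
    ∑ i, f (sortDesc j i) = ∑ i, f (j i) :=
  Equiv.sum_comp (Fin.revPerm.trans (Tuple.sort j)) (f ∘ j)

theorem sortDesc_eq_iff_perm {j jj : Fin l → β} (hjj : Antitone jj) :
    sortDesc j = jj ↔ (List.ofFn j).Perm (List.ofFn jj) := by
  constructor
  · rintro rfl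
    rw [sortDesc_eq_comp_perm]
    exact (Equiv.Perm.ofFn_comp_perm _ j).symm
  · intro h
    rw [sortDesc_eq_comp_perm] at *
    exact List.ofFn_injective (((Equiv.Perm.ofFn_comp_perm _ j).trans h).eq_of_pairwise'
      (antitone_sortDesc j).sortedGE_ofFn.pairwise hjj.sortedGE_ofFn.pairwise)

end Sorting

/- Listing `j` backwards matches the pairing `j'₁ b_{q-1} + ⋯ + j'_{q-1} b₁` of the paper. -/
theorem sum_filter_sortDesc_eq_sum_permutations {M : Type*} [AddCommMonoid M] {l D : ℕ}
    {jj : Fin l → ℕ} (hjj : Antitone jj) (hjjD : ∀ i, jj i < D) (G : (Fin l → ℕ) → M) :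
    ∑ j ∈ (Fintype.piFinset fun _ : Fin l => range D) with sortDesc j = jj, G j
      = ∑ γ ∈ (List.ofFn jj).permutations.toFinset, G fun i => γ.getD (Fin.rev i) 0 := by
  have getD_ofFn (f : Fin l → ℕ) (i : Fin l) : (List.ofFn f).getD i 0 = f i := by simp
  have getD_ofFn_rev (j : Fin l → ℕ) :
      (fun i => (List.ofFn (j ∘ Fin.rev)).getD (Fin.rev i) 0) = j :=
    funext fun i => by rw [getD_ofFn, Function.comp_apply, Fin.rev_rev]
  have ofFn_getD_rev (γ : List ℕ) (hγ : γ ∈ (List.ofFn jj).permutations.toFinset) :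
      List.ofFn ((fun i : Fin l => γ.getD (Fin.rev i) 0) ∘ Fin.rev) = γ := by
    rw [List.mem_toFinset, List.mem_permutations] at hγ
    have hlen : γ.length = l := by simpa using hγ.length_eq
    subst hlen
    simp only [Function.comp_def, Fin.rev_rev]
    exact List.ext_getElem (by simp) fun i _ _ => by simp
  refine sum_nbij' (fun j => List.ofFn (j ∘ Fin.rev)) (fun γ i => γ.getD (Fin.rev i) 0)
    (fun j hj => ?_) (fun γ hγ => ?_) (fun j _ => getD_ofFn_rev j) ofFn_getD_rev
    (fun j _ => by rw [getD_ofFn_rev])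
  · rw [mem_filter] at hj
    rw [List.mem_toFinset, List.mem_permutations]
    exact (Fin.revPerm.ofFn_comp_perm j).trans ((sortDesc_eq_iff_perm hjj).1 hj.2)
  · have hperm : (List.ofFn fun i : Fin l => γ.getD (Fin.rev i) 0).Perm (List.ofFn jj) := by
      refine (Fin.revPerm.ofFn_comp_perm _).symm.trans ?_
      rw [show (⇑Fin.revPerm : Fin l → Fin l) = Fin.rev from rfl, ofFn_getD_rev γ hγ]
      exact List.mem_permutations.1 (List.mem_toFinset.1 hγ)
    refine mem_filter.2 ⟨Fintype.mem_piFinset.2 fun i => ?_, (sortDesc_eq_iff_perm hjj).2 hperm⟩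
    obtain ⟨i', hi'⟩ := List.mem_ofFn.1 (hperm.subset (List.mem_ofFn.2 ⟨i, rfl⟩))
    exact mem_range.2 (hi' ▸ hjjD i')

theorem sum_piFinset_eq_sum_antitone {F : Type*} [Field F] {l D : ℕ} (ξ : F)
    (f : (Fin l → ℕ) → F) (n : ℕ) :
    ∑ j ∈ Fintype.piFinset (fun _ : Fin l => range D),
        ((D : F) ^ l)⁻¹ * (∑ b ∈ Fintype.piFinset fun _ : Fin l => range D,
          f b * ξ ^ (∑ i, j i * b i)) * (1 + ∑ i, ξ ^ (-(j i : ℤ))) ^ n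
      = ∑ jj ∈ (Fintype.piFinset fun _ : Fin l => range D) with
            ∀ i i' : Fin l, i ≤ i' → jj i' ≤ jj i,
          (1 / (D : F) ^ l * ∑ b ∈ Fintype.piFinset fun _ : Fin l => range D,
            f b * ∑ γ ∈ (List.ofFn jj).permutations.toFinset,
              ξ ^ (∑ i : Fin l, γ.getD (i : ℕ) 0 * b (Fin.rev i)))
            * (1 + ∑ i, ξ ^ (-(jj i : ℤ))) ^ n := by
  have hmaps (j) (hj : j ∈ Fintype.piFinset fun _ : Fin l => range D) :
      sortDesc j ∈ (Fintype.piFinset fun _ : Fin l => range D).filter Antitone :=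
    mem_filter.2
      ⟨Fintype.mem_piFinset.2 fun _ => Fintype.mem_piFinset.1 hj _, antitone_sortDesc j⟩
  rw [← sum_fiberwise_of_maps_to hmaps]
  refine sum_congr rfl fun jj hjj => ?_
  obtain ⟨hjjD, hanti⟩ := mem_filter.1 hjj
  calc _ = ∑ j ∈ (Fintype.piFinset fun _ : Fin l => range D) with sortDesc j = jj,
        ((D : F) ^ l)⁻¹ * (∑ b ∈ Fintype.piFinset fun _ : Fin l => range D,
          f b * ξ ^ (∑ i, j i * b i)) * (1 + ∑ i, ξ ^ (-(jj i : ℤ))) ^ n := by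
        refine sum_congr rfl fun j hj => ?_
        rw [← (mem_filter.1 hj).2, sum_comp_sortDesc j fun t => ξ ^ (-(t : ℤ))]
    _ = _ := by
        rw [← sum_mul, ← mul_sum, one_div, sum_comm]
        congr 2
        refine sum_congr rfl fun b _ => ?_
        rw [← mul_sum, sum_filter_sortDesc_eq_sum_permutations hanti
          (fun i => mem_range.1 (Fintype.mem_piFinset.1 hjjD i))]
        refine congrArg _ (sum_congr rfl fun γ _ => congrArg _ ?_)
        exact Fintype.sum_equiv Fin.revPerm _ _ fun i => by simp

theorem sum_esymmVal_eq {K : Type*} [Field K] [Fintype K] (p : ℕ) [ExpChar K p] {l : ℕ}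
    {α : Fin l → K} (hinj : Function.Injective α) (h0 : ∀ i, α i ≠ 0)
    (hcard : Fintype.card K = l + 1) (n k : ℕ) {s D : ℕ} (hD : D = p ^ s) (hk : k < D)
    {F : Type*} [Field F] {ξ : F} (hξ : IsPrimitiveRoot ξ D) (ψ : K → F) :
    ∑ x : Fin n → K, ψ (esymmVal n k x)
      = ∑ jj ∈ (Fintype.piFinset fun _ : Fin l => range D) with
            ∀ i i' : Fin l, i ≤ i' → jj i' ≤ jj i,
          (1 / (D : F) ^ l * ∑ b ∈ Fintype.piFinset fun _ : Fin l => range D,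
            ψ (Lam l α (fun i => (mplus D (b i : ℤ)).toNat) k) *
              ∑ γ ∈ (List.ofFn jj).permutations.toFinset,
                ξ ^ (∑ i : Fin l, γ.getD (i : ℕ) 0 * b (Fin.rev i)))
            * (1 + ∑ i, ξ ^ (-(jj i : ℤ))) ^ n := by
  classical
  have hD0 : 0 < D := by omega
  set f : (Fin l → ℕ) → F := fun b => ψ (Lam l α (fun i => (mplus D (b i : ℤ)).toNat) k)
  have hsummand (x : Fin n → K) : ψ (esymmVal n k x) = f fun i => #{t | x t = α i} % D := by
    rw [esymmVal_eq_lam_card hinj h0 hcard, lam_congr_mod p (hD ▸ hk)]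
    exact fun i => by rw [← hD, toNat_mplus_mod (Nat.mod_lt _ hD0)]
  rw [← sum_piFinset_eq_sum_antitone ξ f]
  calc ∑ x : Fin n → K, ψ (esymmVal n k x)
      = ∑ x : Fin n → K, ∑ j ∈ Fintype.piFinset fun _ : Fin l => range D,
          ((D : F) ^ l)⁻¹ * (∑ b ∈ Fintype.piFinset fun _ : Fin l => range D,
            f b * ξ ^ (∑ i, j i * b i)) * ∏ i, (ξ ^ (-(j i : ℤ))) ^ #{t | x t = α i} :=
        sum_congr rfl fun x _ => by rw [hsummand, apply_mod_eq_fourier_sum hξ hD0 f]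
    _ = _ := by
        rw [sum_comm]
        simp_rw [← mul_sum, sum_prod_pow_card_eq_one_add_sum_pow hinj h0 hcard]

end EsymmExpSum

theorem stmt13_general (p : ℕ) [Fact p.Prime] (r : ℕ) (n k : ℕ)
    (D : ℕ) (hD : D = p ^ (Nat.log p k + 1))
    (K : Type*) [Field K] [Fintype K] [Algebra (ZMod p) K]
    (hcard : Fintype.card K = p ^ r)
    (α : Fin (p ^ r - 1) → K)
    (hinj : Function.Injective α) (h0 : ∀ i, α i ≠ 0)
    (ξD ξp : ℂ)
    (hξD : ξD = Complex.exp (2 * (Real.pi : ℂ) * Complex.I / D))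
    (c : (Fin (p ^ r - 1) → ℕ) → ℂ)
    (hc : ∀ jj, c jj = (1 / (D : ℂ) ^ (p ^ r - 1)) *
      ∑ b ∈ Fintype.piFinset fun _ : Fin (p ^ r - 1) => Finset.range D,
        ξp ^ ((Algebra.trace (ZMod p) K
            (Lam (p ^ r - 1) α (fun i => (mplus D (b i : ℤ)).toNat) (k : ℤ))).val) *
          ∑ γ ∈ (List.ofFn jj).permutations.toFinset,
            ξD ^ (∑ i : Fin (p ^ r - 1), γ.getD (i : ℕ) 0 * b (Fin.rev i))) :
    (∑ x : Fin n → K, ξp ^ ((Algebra.trace (ZMod p) K (esymmVal n k x)).val))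
      = ∑ jj ∈ (Fintype.piFinset fun _ : Fin (p ^ r - 1) => Finset.range D).filter
            (fun jj => ∀ i i' : Fin (p ^ r - 1), i ≤ i' → jj i' ≤ jj i),
          c jj * (1 + ∑ i : Fin (p ^ r - 1), ξD ^ (-(jj i : ℤ))) ^ n := by
  have hp : p.Prime := Fact.out
  have : CharP K p := charP_of_injective_algebraMap (algebraMap (ZMod p) K).injective p
  have hcard' : Fintype.card K = (p ^ r - 1) + 1 := by
    rw [hcard, Nat.sub_add_cancel (Nat.one_le_pow _ _ hp.pos)]
  have hkD : k < D := hD ▸ Nat.lt_pow_succ_log_self hp.one_lt k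
  have hξ : IsPrimitiveRoot ξD D := hξD ▸ Complex.isPrimitiveRoot_exp D (by omega)
  simp only [hc]
  exact EsymmExpSum.sum_esymmVal_eq p hinj h0 hcard' n k hD hkD hξ
    fun y => ξp ^ (Algebra.trace (ZMod p) K y).val

/-- Closed formula for `S_{F_q}(e_{n,k})`, `q = p^r`, `D = p^{⌊log_p k⌋+1}`:
`S_{F_q}(e_{n,k}) = ∑_{j_1=0}^{D-1} ∑_{j_2=0}^{j_1} ⋯ ∑_{j_{q-1}=0}^{j_{q-2}}
c_{j_1,…,j_{q-1}}(k) (1 + ξ_D^{-j_1} + ⋯ + ξ_D^{-j_{q-1}})^n`, the nested decreasing sums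
being encoded as a sum over weakly decreasing tuples, with
`c_{j}(k) = (1/D^{q-1}) ∑_b ξ_p^{Tr(F^{(p)}_{k;F_q}(b_1,…,b_{q-1}))}
∑_{j' ∈ Sym(j)} ξ_D^{j_1' b_{q-1} + ⋯ + j_{q-1}' b_1}` and
`F^{(p)}_{k;F_q}(m) = Λ^{(p)}_{α_1,…,α_{q-1}}(k, m) = Λ_{α_1,…,α_{q-1}}(k, m⁺)`. -/
theorem stmt13 (p : ℕ) [Fact p.Prime] (r : ℕ) (hr : 1 ≤ r) (n k : ℕ)
    (hn : 0 < n) (hk : 1 < k)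
    (D : ℕ) (hD : D = p ^ (Nat.log p k + 1))
    (K : Type*) [Field K] [Fintype K] [Algebra (ZMod p) K]
    (hcard : Fintype.card K = p ^ r)
    (α : Fin (p ^ r - 1) → K)
    (hinj : Function.Injective α) (h0 : ∀ i, α i ≠ 0)
    (ξD ξp : ℂ)
    (hξD : ξD = Complex.exp (2 * (Real.pi : ℂ) * Complex.I / D))
    (hξp : ξp = Complex.exp (2 * (Real.pi : ℂ) * Complex.I / p))
    (c : (Fin (p ^ r - 1) → ℕ) → ℂ)
    (hc : ∀ jj, c jj = (1 / (D : ℂ) ^ (p ^ r - 1)) *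
      ∑ b ∈ Fintype.piFinset fun _ : Fin (p ^ r - 1) => Finset.range D,
        ξp ^ ((Algebra.trace (ZMod p) K
            (Lam (p ^ r - 1) α (fun i => (mplus D (b i : ℤ)).toNat) (k : ℤ))).val) *
          ∑ γ ∈ (List.ofFn jj).permutations.toFinset,
            ξD ^ (∑ i : Fin (p ^ r - 1), γ.getD (i : ℕ) 0 * b (Fin.rev i))) :
    (∑ x : Fin n → K, ξp ^ ((Algebra.trace (ZMod p) K (esymmVal n k x)).val))
      = ∑ jj ∈ (Fintype.piFinset fun _ : Fin (p ^ r - 1) => Finset.range D).filter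
            (fun jj => ∀ i i' : Fin (p ^ r - 1), i ≤ i' → jj i' ≤ jj i),
          c jj * (1 + ∑ i : Fin (p ^ r - 1), ξD ^ (-(jj i : ℤ))) ^ n :=
  stmt13_general p r n k D hD K hcard α hinj h0 ξD ξp hξD c hc
end
end

section
/- Let n and k > 1 be positive integers, p a prime, q = p^r with r ≥ 1, and D = p^{⌊log_p(k)⌋+1}. For each tuple (a_1, ..., a_{q−1}) with 0 ≤ a_{q−1} ≤ ... ≤ a_2 ≤ a_1 ≤ D−1, let M_{a_1,...,a_{q−1}}(X) be the minimal polynomial over Q of the algebraic integer 1 + ξ_D^{a_1} + ... + ξ_D^{a_{q−1}}, where ξ_D = exp(2πi/D). Then the sequence (S_{F_q}(e_{n,k}))_{n≥1} satisfies the linear recurrence with integer coefficients whose characteristic polynomial is χ_{q,k}(X) = lcm of the polynomials M_{a_1,...,a_{q−1}}(X) over all tuples with 0 ≤ a_{q−1} ≤ ... ≤ a_1 ≤ D−1. -/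
noncomputable section

open Polynomial

/-!
In `∏ᵢ (1 + xᵢ X) = ∏_{c ≠ 0} (1 + c X) ^ N_c(x)`, where `N_c(x)` counts the coordinates of `x`
equal to `c`, the coefficient of `X ^ k` is `e_{n,k}(x)`. In characteristic `p` we have
`(1 + c X) ^ D ≡ 1 mod X ^ D`, and `k < D`, so `e_{n,k}(x)` only depends on the multiplicity vector
`N(x) mod D` in the finite group `(ZMod D) ^ (F_q^×)`. Expanding the summand of `S_{F_q}(e_{n,k})`,
as a function on that group, in additive characters `ψ`, the sum over `x` factors over the
coordinates: `S_n = ∑_ψ c_ψ λ_ψ ^ n` with `λ_ψ = 1 + ∑_{c ≠ 0} ψ(e_c)`. Each `ψ(e_c)` is a `D`-th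
root of unity, so after sorting the exponents `λ_ψ` is one of the numbers
`1 + ξ_D ^ a_1 + ⋯ + ξ_D ^ a_{q-1}`, hence a root of the monic polynomial `χ`; this gives the
recurrence. `χ` has integer coefficients by Gauss's lemma, as it divides the product of the
(monic, integral) minimal polynomials over `ℤ`.
-/

open Finset

namespace AddChar

theorem map_sum_eq_prod_s16 {A M ι : Type*} [AddCommMonoid A] [CommMonoid M] (ψ : AddChar A M)
    (s : Finset ι) (f : ι → A) : ψ (∑ i ∈ s, f i) = ∏ i ∈ s, ψ (f i) :=
  map_prod ψ.toMonoidHom (fun i => Multiplicative.ofAdd (f i)) s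

theorem apply_pow_eq_one {σ M : Type*} [CommMonoid M] {D : ℕ} (ψ : AddChar (σ → ZMod D) M)
    (v : σ → ZMod D) : ψ v ^ D = 1 := by
  rw [← map_nsmul_eq_pow]
  convert ψ.map_zero_eq_one
  ext c
  simp

theorem exists_sum_apply_sum_eq_sum_mul_pow {α ι : Type*} [AddCommGroup α] [Finite α]
    [Fintype ι] (F : α → ℂ) (g : ι → α) :
    ∃ c : AddChar α ℂ → ℂ, ∀ n, ∑ x : Fin n → ι, F (∑ i, g (x i)) =
      ∑ ψ : AddChar α ℂ, c ψ * (∑ y, ψ (g y)) ^ n := by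
  refine ⟨(complexBasis α).repr F, fun n => ?_⟩
  have hF : ∀ a, F a = ∑ ψ : AddChar α ℂ, (complexBasis α).repr F ψ * ψ a := fun a => by
    have := congr_fun ((complexBasis α).sum_repr F) a
    simp only [Finset.sum_apply, Pi.smul_apply, complexBasis_apply, smul_eq_mul] at this
    exact this.symm
  simp_rw [hF]
  rw [sum_comm]
  refine sum_congr rfl fun ψ _ => ?_
  rw [← mul_sum, Fintype.sum_pow]
  simp_rw [map_sum_eq_prod_s16]

end AddChar

namespace Polynomial

theorem Monic.pow_add_natDegree_eq_sum {R : Type*} [CommRing R] {P : R[X]} (hP : P.Monic)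
    {x : R} (hx : P.IsRoot x) (n : ℕ) :
    x ^ (n + P.natDegree) = ∑ m ∈ range P.natDegree, -P.coeff m * x ^ (n + m) := by
  have h := hx.eq_zero
  rw [hP.as_sum, eval_add, eval_pow, eval_X, eval_finsetSum, add_eq_zero_iff_eq_neg] at h
  simp only [eval_mul, eval_C, eval_pow, eval_X] at h
  rw [pow_add, h, ← sum_neg_distrib, mul_sum]
  exact sum_congr rfl fun m _ => by ring

theorem Monic.apply_add_natDegree_eq_sum {R ι : Type*} [CommRing R] {P : R[X]} (hP : P.Monic)
    {s : Finset ι} {c x : ι → R} (hx : ∀ j ∈ s, P.IsRoot (x j)) {u : ℕ → R}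
    (hu : ∀ n, u n = ∑ j ∈ s, c j * x j ^ n) (n : ℕ) :
    u (n + P.natDegree) = ∑ m ∈ range P.natDegree, -P.coeff m * u (n + m) := by
  simp_rw [hu, mul_sum]
  rw [sum_comm]
  refine sum_congr rfl fun j hj => ?_
  rw [hP.pow_add_natDegree_eq_sum (hx j hj), mul_sum]
  exact sum_congr rfl fun m _ => by ring

theorem coeff_prod_one_add_C_mul_X {R ι : Type*} [CommRing R] (s : Finset ι) (x : ι → R)
    (k : ℕ) : (∏ i ∈ s, (1 + C (x i) * X)).coeff k = ∑ t ∈ s.powersetCard k, ∏ i ∈ t, x i := by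
  classical
  have h : ∀ t : Finset ι, ∏ i ∈ t, C (x i) * X = C (∏ i ∈ t, x i) * X ^ #t := fun t => by
    rw [prod_mul_distrib, prod_const, map_prod]
  simp_rw [prod_one_add, h, finsetSum_coeff, coeff_C_mul_X_pow, powersetCard_eq_filter,
    sum_filter, eq_comm]

theorem coeff_eq_coeff_of_X_pow_dvd_sub {R : Type*} [Ring R] {P Q : R[X]} {D k : ℕ}
    (h : X ^ D ∣ P - Q) (hk : k < D) : P.coeff k = Q.coeff k :=
  sub_eq_zero.1 (by rw [← coeff_sub]; exact X_pow_dvd_iff.1 h k hk)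

theorem coeff_prod_one_add_C_mul_X_pow_mod {R ι : Type*} [CommRing R] (p : ℕ) [ExpChar R p]
    {s k : ℕ} (hk : k < p ^ s) (T : Finset ι) (c : ι → R) (b : ι → ℕ) :
    (∏ i ∈ T, (1 + C (c i) * X) ^ b i).coeff k =
      (∏ i ∈ T, (1 + C (c i) * X) ^ (b i % p ^ s)).coeff k := by
  refine coeff_eq_coeff_of_X_pow_dvd_sub ?_ hk
  rw [← Ideal.mem_span_singleton, ← Ideal.Quotient.eq, map_prod, map_prod]
  refine prod_congr rfl fun i _ => ?_
  rw [map_pow, map_pow]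
  refine pow_eq_pow_mod _ ?_
  -- Frobenius: `(1 + c X) ^ p ^ s = 1 + c ^ p ^ s * X ^ p ^ s`.
  rw [← map_pow, add_pow_expChar_pow, one_pow, mul_pow, ← C_pow, map_add, map_mul,
    Ideal.Quotient.eq_zero_iff_mem.2 (Ideal.mem_span_singleton_self _), mul_zero, add_zero,
    map_one]

end Polynomial

theorem IsPrimitiveRoot.exists_antitone_sum_pow_eq {R ι : Type*} [CommRing R] [IsDomain R]
    [Fintype ι] {D N : ℕ} [NeZero D] {ξ : R} (hξ : IsPrimitiveRoot ξ D)
    (hN : Fintype.card ι = N) (ζ : ι → R) (hζ : ∀ i, ζ i ^ D = 1) :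
    ∃ a : Fin N → ℕ, (∀ j, a j < D) ∧ Antitone a ∧ ∑ i, ζ i = ∑ j, ξ ^ a j := by
  choose b hbD hb using fun i => hξ.eq_pow_of_pow_eq_one (hζ i)
  let v : Fin N → ℕ := b ∘ (Fintype.equivFinOfCardEq hN).symm
  let σ : Equiv.Perm (Fin N) := Fin.revPerm.trans (Tuple.sort v)
  refine ⟨v ∘ σ, fun j => hbD _, fun i j hij => Tuple.monotone_sort v (Fin.rev_le_rev.2 hij), ?_⟩
  rw [Fintype.sum_equiv σ (fun j => ξ ^ (v ∘ σ) j) (fun j => ξ ^ v j) fun j => rfl]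
  exact Fintype.sum_equiv (Fintype.equivFinOfCardEq hN) _ _ fun i => by simp [v, hb]

namespace Finset

theorem monic_lcm {K ι : Type*} [Field K] [DecidableEq K] (s : Finset ι) {f : ι → K[X]}
    (hf : ∀ i ∈ s, f i ≠ 0) : (s.lcm f).Monic := by
  have hne : s.lcm f ≠ 0 := fun h => by
    obtain ⟨i, hi, h0⟩ := lcm_eq_zero_iff.1 h
    exact hf i hi h0
  simpa only [normalize_lcm] using monic_normalize hne

theorem exists_map_eq_lcm_minpoly {R K L ι : Type*} [CommRing R] [IsDomain R]
    [IsIntegrallyClosed R] [Field K] [DecidableEq K] [Algebra R K] [IsFractionRing R K] [Field L]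
    [Algebra R L] [Algebra K L] [IsScalarTower R K L] (s : Finset ι) {x : ι → L}
    (hx : ∀ i ∈ s, IsIntegral R (x i)) :
    ∃ g : R[X], g.map (algebraMap R K) = s.lcm fun i => minpoly K (x i) := by
  have hmonic : (s.lcm fun i => minpoly K (x i)).Monic :=
    s.monic_lcm fun i hi => minpoly.ne_zero (hx i hi).tower_top
  have hdvd : (s.lcm fun i => minpoly K (x i)) ∣
      (∏ i ∈ s, minpoly R (x i)).map (algebraMap R K) :=
    lcm_dvd fun i hi => by
      rw [minpoly.isIntegrallyClosed_eq_field_fractions' K (hx i hi)]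
      exact Polynomial.map_dvd _ (dvd_prod_of_mem _ hi)
  obtain ⟨g, hg⟩ := IsIntegrallyClosed.eq_map_mul_C_of_dvd K
    (monic_prod_of_monic _ _ fun i hi => minpoly.monic (hx i hi)) hdvd
  exact ⟨g, by rwa [hmonic.leadingCoeff, C_1, mul_one] at hg⟩

end Finset

theorem esymmVal_eq_coeff_prod_pow_card {K : Type*} [Field K] [Fintype K] [DecidableEq K]
    {n : ℕ} (k : ℕ) (x : Fin n → K) :
    esymmVal n k x = (∏ c : {c : K // c ≠ 0}, (1 + C (c : K) * X) ^ #{i | x i = c}).coeff k := by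
  rw [esymmVal, ← coeff_prod_one_add_C_mul_X, ← prod_fiberwise' univ x fun c => 1 + C c * X]
  simp_rw [prod_const]
  rw [Fintype.prod_eq_mul_prod_subtype_ne _ 0, map_zero, zero_mul, add_zero, one_pow, one_mul]

theorem exists_sum_esymmVal_eq_sum_mul_pow {K : Type*} [Field K] [Fintype K] [DecidableEq K]
    (p : ℕ) [Fact p.Prime] [CharP K p] {s k : ℕ} (hk : k < p ^ s) (Φ : K → ℂ) :
    ∃ c : AddChar ({y : K // y ≠ 0} → ZMod (p ^ s)) ℂ → ℂ, ∀ n,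
      ∑ x : Fin n → K, Φ (esymmVal n k x) =
        ∑ ψ, c ψ * (1 + ∑ y : {y : K // y ≠ 0}, ψ (Pi.single y 1)) ^ n := by
  -- `∑ i, g (x i)` is the vector of multiplicities mod `p ^ s` of the nonzero values of `x`.
  let g : K → {y : K // y ≠ 0} → ZMod (p ^ s) := fun y c => if y = c then 1 else 0
  obtain ⟨c, hc⟩ := AddChar.exists_sum_apply_sum_eq_sum_mul_pow
    (fun m => Φ ((∏ c : {c : K // c ≠ 0}, (1 + C (c : K) * X) ^ (m c).val).coeff k)) g
  have hcount : ∀ n (x : Fin n → K), esymmVal n k x =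
      (∏ c : {c : K // c ≠ 0}, (1 + C (c : K) * X) ^ ((∑ i, g (x i)) c).val).coeff k := by
    intro n x
    simp only [Finset.sum_apply, g, sum_boole, ZMod.val_natCast]
    rw [esymmVal_eq_coeff_prod_pow_card, coeff_prod_one_add_C_mul_X_pow_mod p hk]
  have heigen : ∀ ψ : AddChar ({y : K // y ≠ 0} → ZMod (p ^ s)) ℂ,
      ∑ y, ψ (g y) = 1 + ∑ y : {y : K // y ≠ 0}, ψ (Pi.single y 1) := by
    intro ψ
    rw [Fintype.sum_eq_add_sum_subtype_ne _ 0]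
    congr 1
    · convert ψ.map_zero_eq_one
      ext c
      simp [g, eq_comm, c.2]
    · refine sum_congr rfl fun y _ => congr_arg ψ ?_
      ext c
      simp [g, Pi.single_apply, Subtype.ext_iff, eq_comm]
  exact ⟨c, fun n => by simp_rw [hcount, hc, heigen]⟩

theorem stmt16_general (p : ℕ) [Fact p.Prime] (r : ℕ) (k : ℕ)
    (D : ℕ) (hD : D = p ^ (Nat.log p k + 1))
    (K : Type*) [Field K] [Fintype K] [Algebra (ZMod p) K]
    (hcard : Fintype.card K = p ^ r)
    (ξD : ℂ) (hξD : ξD = Complex.exp (2 * (Real.pi : ℂ) * Complex.I / D))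
    (Sq : ℕ → ℂ)
    (hSq : ∀ n, Sq n = ∑ x : Fin n → K,
      Complex.exp (2 * (Real.pi : ℂ) * Complex.I / p *
        ((Algebra.trace (ZMod p) K (esymmVal n k x)).val : ℂ)))
    (A : Finset (Fin (p ^ r - 1) → ℕ))
    (hA : A = (Fintype.piFinset fun _ : Fin (p ^ r - 1) => Finset.range D).filter
      (fun a => ∀ i i' : Fin (p ^ r - 1), i ≤ i' → a i' ≤ a i))
    (χ : Polynomial ℚ)
    (hχ : χ = A.lcm fun a => minpoly ℚ ((1 + ∑ i : Fin (p ^ r - 1), ξD ^ (a i) : ℂ)))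
    (d : ℕ) (hd : d = χ.natDegree) :
    (∀ i, ∃ z : ℤ, χ.coeff i = (z : ℚ)) ∧
      ∀ n : ℕ, 1 ≤ n →
        Sq (n + d) = ∑ m ∈ Finset.range d, (-(χ.coeff m : ℂ)) * Sq (n + m) := by
  classical
  subst hD
  have hprim : IsPrimitiveRoot ξD (p ^ (Nat.log p k + 1)) :=
    hξD ▸ Complex.isPrimitiveRoot_exp _ (NeZero.ne _)
  have : CharP K p := charP_of_injective_algebraMap (algebraMap (ZMod p) K).injective p
  obtain ⟨c, hc⟩ := exists_sum_esymmVal_eq_sum_mul_pow p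
    (Nat.lt_pow_succ_log_self (Fact.out : p.Prime).one_lt k) fun v =>
      Complex.exp (2 * (Real.pi : ℂ) * Complex.I / p * ((Algebra.trace (ZMod p) K v).val : ℂ))
  have hint : ∀ a : Fin (p ^ r - 1) → ℕ, IsIntegral ℤ (1 + ∑ i, ξD ^ a i) := fun a =>
    isIntegral_one.add (IsIntegral.sum _ fun i _ => (hprim.isIntegral (NeZero.pos _)).pow _)
  have hmonic : χ.Monic := hχ ▸ A.monic_lcm fun a _ => minpoly.ne_zero (hint a).tower_top
  have hcardne : Fintype.card {y : K // y ≠ 0} = p ^ r - 1 := by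
    rw [Fintype.card_subtype_compl, Fintype.card_subtype_eq, hcard]
  have hroot : ∀ ψ : AddChar ({y : K // y ≠ 0} → ZMod (p ^ (Nat.log p k + 1))) ℂ,
      (χ.map (algebraMap ℚ ℂ)).IsRoot (1 + ∑ y : {y : K // y ≠ 0}, ψ (Pi.single y 1)) := by
    intro ψ
    obtain ⟨a, haD, ha, hsum⟩ := hprim.exists_antitone_sum_pow_eq hcardne _
      fun y => ψ.apply_pow_eq_one (Pi.single y 1)
    have haA : a ∈ A := by
      simpa [hA, Fintype.mem_piFinset, haD] using fun i j hij => ha hij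
    rw [IsRoot, eval_map_algebraMap, hsum, ← minpoly.dvd_iff, hχ]
    exact Finset.dvd_lcm haA
  refine ⟨fun i => ?_, fun n _ => ?_⟩
  · obtain ⟨g, hg⟩ := A.exists_map_eq_lcm_minpoly (K := ℚ) fun a _ => hint a
    exact ⟨g.coeff i, by rw [hχ, ← hg, coeff_map, eq_intCast]⟩
  · have := (hmonic.map (algebraMap ℚ ℂ)).apply_add_natDegree_eq_sum (fun ψ _ => hroot ψ)
      (fun n => (hSq n).trans (hc n)) n
    simpa only [natDegree_map, coeff_map, eq_ratCast, ← hd] using this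

/-- The sequence `(S_{F_q}(e_{n,k}))_{n ≥ 1}` satisfies the linear recurrence with integer
coefficients whose characteristic polynomial is
`χ_{q,k}(X) = lcm (M_{a_1,…,a_{q-1}}(X))_{0 ≤ a_{q-1} ≤ ⋯ ≤ a_1 ≤ D-1}`, where
`M_{a_1,…,a_{q-1}}` is the minimal polynomial over `ℚ` of `1 + ξ_D^{a_1} + ⋯ + ξ_D^{a_{q-1}}`
and `ξ_D = exp(2πi/D)`, `D = p^{⌊log_p k⌋+1}`. -/
theorem stmt16 (p : ℕ) [Fact p.Prime] (r : ℕ) (hr : 1 ≤ r) (k : ℕ) (hk : 1 < k)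
    (D : ℕ) (hD : D = p ^ (Nat.log p k + 1))
    (K : Type*) [Field K] [Fintype K] [Algebra (ZMod p) K]
    (hcard : Fintype.card K = p ^ r)
    (ξD : ℂ) (hξD : ξD = Complex.exp (2 * (Real.pi : ℂ) * Complex.I / D))
    (Sq : ℕ → ℂ)
    (hSq : ∀ n, Sq n = ∑ x : Fin n → K,
      Complex.exp (2 * (Real.pi : ℂ) * Complex.I / p *
        ((Algebra.trace (ZMod p) K (esymmVal n k x)).val : ℂ)))
    (A : Finset (Fin (p ^ r - 1) → ℕ))
    (hA : A = (Fintype.piFinset fun _ : Fin (p ^ r - 1) => Finset.range D).filter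
      (fun a => ∀ i i' : Fin (p ^ r - 1), i ≤ i' → a i' ≤ a i))
    (χ : Polynomial ℚ)
    (hχ : χ = A.lcm fun a => minpoly ℚ ((1 + ∑ i : Fin (p ^ r - 1), ξD ^ (a i) : ℂ)))
    (d : ℕ) (hd : d = χ.natDegree) :
    (∀ i, ∃ z : ℤ, χ.coeff i = (z : ℚ)) ∧
      ∀ n : ℕ, 1 ≤ n →
        Sq (n + d) = ∑ m ∈ Finset.range d, (-(χ.coeff m : ℂ)) * Sq (n + m) :=
  stmt16_general p r k D hD K hcard ξD hξD Sq hSq A hA χ hχ d hd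
end
end

section
/- Let m be a positive integer, π(m) the Pisano period modulo m (the period of the Fibonacci sequence reduced modulo m), f_n^{(m)} = f_n mod m where f_n is the n-th Fibonacci number, and ξ_{π(m)} = exp(2πi/π(m)). Define S_m(n) = Σ_{q=0}^{n} C(n,q) · ξ_{π(m)}^{f_q^{(m)}}. Then S_m(n) = Σ_{j=0}^{π(m)−1} ((1/π(m)) Σ_{t=0}^{π(m)−1} ξ_{π(m)}^{f_t^{(m)} + tj}) · (1 + ξ_{π(m)}^{−j})^n, and the sequence (S_m(n)) satisfies the linear recurrence with integer coefficients whose characteristic polynomial is P_{S_m}(X) = Π_{a=0}^{π(m)−1} (X − (1 + ξ_{π(m)}^{a})). -/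
/-!
The sequence `q ↦ ξ ^ (f_q mod m)` is `π(m)`-periodic, so discrete Fourier inversion writes it
as a combination of the geometric sequences `(ξ⁻ʲ)^q`, and the binomial theorem turns each of
these into `(1 + ξ⁻ʲ)^n`. The numbers `1 + ξ^a` are the roots of `(X - 1)^π(m) - 1 ∈ ℤ[X]`, so this
is `P`, and a combination of `n`-th powers of roots of a monic polynomial satisfies the linear
recurrence read off from its coefficients.
-/

open Polynomial Finset

namespace IsPrimitiveRoot

variable {K : Type*} [Field K] {ζ : K} {N : ℕ}

theorem sum_range_pow_mul_zpow_neg_pow (hζ : IsPrimitiveRoot ζ N) (t q : ℕ) :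
    ∑ j ∈ range N, ζ ^ (t * j) * (ζ ^ (-(j : ℤ))) ^ q = if t ≡ q [MOD N] then (N : K) else 0 := by
  obtain rfl | hN := eq_or_ne N 0
  · simp
  have hζ0 : ζ ≠ 0 := hζ.ne_zero hN
  set w := ζ ^ t * (ζ ^ q)⁻¹ with hw
  have hterm : ∀ j : ℕ, ζ ^ (t * j) * (ζ ^ (-(j : ℤ))) ^ q = w ^ j := fun j ↦ by
    rw [zpow_neg, zpow_natCast, inv_pow, ← pow_mul, mul_comm j q, pow_mul, pow_mul, ← inv_pow,
      mul_pow]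
  have hwN : w ^ N = 1 := by
    rw [hw, mul_pow, inv_pow, ← pow_mul, ← pow_mul, mul_comm t, mul_comm q, pow_mul, pow_mul,
      hζ.pow_eq_one, one_pow, one_pow, inv_one, mul_one]
  have hw1 : w = 1 ↔ t ≡ q [MOD N] := by
    rw [hw, mul_inv_eq_one₀ (pow_ne_zero q hζ0), (hζ.isOfFinOrder hN).pow_eq_pow_iff_modEq,
      ← hζ.eq_orderOf]
  simp_rw [hterm]
  split_ifs with htq
  · simp [hw1.mpr htq]
  · rw [geom_sum_eq (mt hw1.mp htq), hwN, sub_self, zero_div]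

theorem dft_inversion_of_periodic (hζ : IsPrimitiveRoot ζ N) (hN : (N : K) ≠ 0)
    {g : ℕ → K} (hg : Function.Periodic g N) (q : ℕ) :
    ∑ j ∈ range N, ((1 / N) * ∑ t ∈ range N, g t * ζ ^ (t * j)) * (ζ ^ (-(j : ℤ))) ^ q = g q := by
  have hmod : ∀ t ∈ range N, (t ≡ q [MOD N]) ↔ t = q % N := fun t ht ↦ by
    rw [Nat.ModEq, Nat.mod_eq_of_lt (mem_range.mp ht)]
  have hqN : q % N ∈ range N :=
    mem_range.mpr (Nat.mod_lt q (Nat.pos_of_ne_zero (by rintro rfl; simp at hN)))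
  calc ∑ j ∈ range N, ((1 / N) * ∑ t ∈ range N, g t * ζ ^ (t * j)) * (ζ ^ (-(j : ℤ))) ^ q
      = (1 / N) * ∑ t ∈ range N, g t * ∑ j ∈ range N, ζ ^ (t * j) * (ζ ^ (-(j : ℤ))) ^ q := by
        simp_rw [mul_sum, sum_mul]
        rw [sum_comm]
        refine sum_congr rfl fun t _ ↦ sum_congr rfl fun j _ ↦ ?_
        ring
    _ = (1 / N) * ∑ t ∈ range N, g t * if t = q % N then (N : K) else 0 := by
        simp_rw [hζ.sum_range_pow_mul_zpow_neg_pow]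
        congr 1
        exact sum_congr rfl fun t ht ↦ by rw [if_congr (hmod t ht) rfl rfl]
    _ = g q := by
        simp_rw [mul_ite, mul_zero]
        rw [sum_ite_eq' _ _ _, if_pos hqN, hg.map_mod_nat]
        field_simp

end IsPrimitiveRoot

theorem sum_range_choose_mul_sum_mul_pow {R ι : Type*} [CommSemiring R] (s : Finset ι)
    (c r : ι → R) (n : ℕ) :
    ∑ q ∈ range (n + 1), (n.choose q : R) * ∑ j ∈ s, c j * r j ^ q =
      ∑ j ∈ s, c j * (1 + r j) ^ n := by
  simp_rw [mul_sum]
  rw [sum_comm]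
  refine sum_congr rfl fun j _ ↦ ?_
  rw [add_comm (1 : R), add_pow, mul_sum]
  refine sum_congr rfl fun q _ ↦ ?_
  ring

namespace Polynomial.Monic

variable {R : Type*} [CommRing R] {P : R[X]}

theorem pow_natDegree_eq_of_isRoot (hP : P.Monic) {r : R} (hr : P.IsRoot r) :
    r ^ P.natDegree = ∑ a ∈ range P.natDegree, -P.coeff a * r ^ a := by
  have h := hr.eq_zero
  rw [eval_eq_sum_range, sum_range_succ, hP.coeff_natDegree, one_mul] at h
  simp only [neg_mul, sum_neg_distrib]
  linear_combination h

theorem sum_mul_pow_add_natDegree_s18 {ι : Type*} (hP : P.Monic) (s : Finset ι) (c r : ι → R)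
    (hr : ∀ j ∈ s, P.IsRoot (r j)) (n : ℕ) :
    ∑ j ∈ s, c j * r j ^ (n + P.natDegree) =
      ∑ a ∈ range P.natDegree, -P.coeff a * ∑ j ∈ s, c j * r j ^ (n + a) := by
  simp_rw [mul_sum]
  rw [sum_comm]
  refine sum_congr rfl fun j hj ↦ ?_
  rw [pow_add, hP.pow_natDegree_eq_of_isRoot (hr j hj), mul_sum, mul_sum]
  refine sum_congr rfl fun a _ ↦ ?_
  ring

end Polynomial.Monic

theorem IsPrimitiveRoot.prod_range_X_sub_C_one_add_pow {R : Type*} [CommRing R] [IsDomain R]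
    {ζ : R} {N : ℕ} (hζ : IsPrimitiveRoot ζ N) (hN : 0 < N) :
    ∏ a ∈ range N, (X - C (1 + ζ ^ a)) = (X - 1) ^ N - 1 := by
  have h := congrArg (fun p : R[X] ↦ p.comp (X - 1)) (X_pow_sub_C_eq_prod hζ hN (one_pow N))
  simp only [sub_comp, pow_comp, X_comp, C_comp, mul_one, Polynomial.prod_comp, C_1,
    one_comp] at h
  rw [h]
  refine prod_congr rfl fun a _ ↦ ?_
  rw [C_add, C_1]
  ring

theorem stmt18_general (m : ℕ)
    (pis : ℕ) (hpis : 0 < pis)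
    (hper : ∀ n : ℕ, Nat.fib (n + pis) % m = Nat.fib n % m)
    (ξ : ℂ) (hξ : ξ = Complex.exp (2 * (Real.pi : ℂ) * Complex.I / pis))
    (S : ℕ → ℂ)
    (hS : ∀ n, S n = ∑ q ∈ Finset.range (n + 1),
      (n.choose q : ℂ) * ξ ^ (Nat.fib q % m))
    (P : Polynomial ℂ)
    (hP : P = ∏ a ∈ Finset.range pis, (X - C (1 + ξ ^ a))) :
    (∀ n, S n = ∑ j ∈ Finset.range pis,
        ((1 / pis) * ∑ t ∈ Finset.range pis, ξ ^ (Nat.fib t % m + t * j)) *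
          (1 + ξ ^ (-(j : ℤ))) ^ n) ∧
      (∀ i, ∃ z : ℤ, P.coeff i = (z : ℂ)) ∧
      ∀ n : ℕ, S (n + pis) = ∑ a ∈ Finset.range pis, (-(P.coeff a)) * S (n + a) := by
  have hprim : IsPrimitiveRoot ξ pis := hξ ▸ Complex.isPrimitiveRoot_exp pis hpis.ne'
  have hmonic : P.Monic := hP ▸ monic_prod_X_sub_C _ _
  have hdeg : P.natDegree = pis := by
    rw [hP, natDegree_prod_of_monic _ _ fun a _ ↦ monic_X_sub_C _]
    simp only [natDegree_X_sub_C, sum_const, card_range, smul_eq_mul, mul_one]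
  replace hP : P = (X - 1) ^ pis - 1 := hP.trans (hprim.prod_range_X_sub_C_one_add_pow hpis)
  have hPint : P = ((X - 1) ^ pis - 1 : ℤ[X]).map (Int.castRingHom ℂ) := by simp [hP]
  have hroot : ∀ j : ℕ, P.IsRoot (1 + ξ ^ (-(j : ℤ))) := fun j ↦ by
    rw [IsRoot, hP, eval_sub, eval_pow, eval_sub, eval_X, eval_one, add_sub_cancel_left, zpow_neg,
      zpow_natCast, inv_pow, ← pow_mul, mul_comm, pow_mul, hprim.pow_eq_one, one_pow, inv_one,
      sub_self]
  have hformula : ∀ n, S n = ∑ j ∈ range pis,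
      ((1 / pis) * ∑ t ∈ range pis, ξ ^ (Nat.fib t % m + t * j)) * (1 + ξ ^ (-(j : ℤ))) ^ n := by
    intro n
    simp_rw [hS, pow_add, ← sum_range_choose_mul_sum_mul_pow,
      hprim.dft_inversion_of_periodic (by exact_mod_cast hpis.ne')
        (g := fun q ↦ ξ ^ (Nat.fib q % m)) fun q ↦ by simp only [hper]]
  refine ⟨hformula, fun i ↦ ⟨((X - 1) ^ pis - 1 : ℤ[X]).coeff i, by rw [hPint, coeff_map]; rfl⟩,
    fun n ↦ ?_⟩
  simp_rw [hformula, ← hdeg]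
  exact hmonic.sum_mul_pow_add_natDegree_s18 _ _ _ (fun j _ ↦ hroot j) n

/-- Closed formula and recurrence for `S_m(n) = ∑_{q=0}^n C(n,q) ξ_{π(m)}^{f_q mod m}`, where
`π(m)` is the Pisano period mod `m` (the period of the Fibonacci sequence mod `m`) and
`ξ_{π(m)} = exp(2πi/π(m))`:
`S_m(n) = ∑_{j=0}^{π(m)-1} ((1/π(m)) ∑_{t=0}^{π(m)-1} ξ_{π(m)}^{f_t mod m + tj})
(1 + ξ_{π(m)}^{-j})^n`, and `(S_m(n))` satisfies the linear recurrence with integer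
coefficients whose characteristic polynomial is
`P_{S_m}(X) = ∏_{a=0}^{π(m)-1} (X - (1 + ξ_{π(m)}^a))`. -/
theorem stmt18 (m : ℕ) (hm : 0 < m)
    (pis : ℕ) (hpis : 0 < pis)
    (hper : ∀ n : ℕ, Nat.fib (n + pis) % m = Nat.fib n % m)
    (hmin : ∀ pis' : ℕ, 0 < pis' →
      (∀ n : ℕ, Nat.fib (n + pis') % m = Nat.fib n % m) → pis ≤ pis')
    (ξ : ℂ) (hξ : ξ = Complex.exp (2 * (Real.pi : ℂ) * Complex.I / pis))
    (S : ℕ → ℂ)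
    (hS : ∀ n, S n = ∑ q ∈ Finset.range (n + 1),
      (n.choose q : ℂ) * ξ ^ (Nat.fib q % m))
    (P : Polynomial ℂ)
    (hP : P = ∏ a ∈ Finset.range pis, (X - C (1 + ξ ^ a))) :
    (∀ n, S n = ∑ j ∈ Finset.range pis,
        ((1 / pis) * ∑ t ∈ Finset.range pis, ξ ^ (Nat.fib t % m + t * j)) *
          (1 + ξ ^ (-(j : ℤ))) ^ n) ∧
      (∀ i, ∃ z : ℤ, P.coeff i = (z : ℂ)) ∧
      ∀ n : ℕ, S (n + pis) = ∑ a ∈ Finset.range pis, (-(P.coeff a)) * S (n + a) :=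
  stmt18_general m pis hpis hper ξ hξ S hS P hP
end
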